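/- arXiv:1603.07781 — 4 statements merged into one kernel-verified Lean document; each statement's English description precedes it below -/
import Mathlib

section
/- Let Ω ⊆ ℝⁿ be a bounded measurable set of positive Lebesgue measure and K_Ω the associated convolution-type integral operator on L²(Ω) with positive non-increasing kernel K. If u ∈ L²(Ω) is a nonzero eigenfunction of K_Ω corresponding to an eigenvalue λ with |λ| = ‖K_Ω‖ (an eigenvalue of largest modulus), then u has constant sign: either u > 0 almost everywhere on Ω or u < 0 almost everywhere on Ω. -/
open MeasureTheory
open scoped ENNReal

set_option maxHeartbeats 1000000

abbrev Xsp (n : ℕ) := EuclideanSpace ℝ (Fin n)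

/-- An eigenfunction of the convolution-type integral operator `K_Ω` on `L²(Ω)`, `Ω ⊆ ℝⁿ`
bounded and measurable of positive Lebesgue measure, with positive non-increasing kernel `K`,
corresponding to an eigenvalue of largest modulus `|lam| = ‖K_Ω‖`, has constant sign:
it is either positive a.e. on `Ω` or negative a.e. on `Ω`. -/
theorem first_eigenfunction_constant_sign_euclidean
    (n : ℕ) (Ω : Set (EuclideanSpace ℝ (Fin n)))
    (hΩm : MeasurableSet Ω) (hΩb : Bornology.IsBounded Ω) (hΩpos : 0 < volume Ω)
    (K : ℝ → ℝ)
    (hKpos : ∀ ρ, 0 ≤ ρ → 0 < K ρ)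
    (hKmono : ∀ ρ₁ ρ₂, 0 ≤ ρ₁ → ρ₁ ≤ ρ₂ → K ρ₂ ≤ K ρ₁)
    (T : Lp ℝ 2 (volume.restrict Ω) →L[ℝ] Lp ℝ 2 (volume.restrict Ω))
    (hTcomp : IsCompactOperator T)
    (hT : ∀ f : Lp ℝ 2 (volume.restrict Ω),
      ∀ᵐ x ∂(volume.restrict Ω),
        (T f) x = ∫ y, K (dist x y) * f y ∂(volume.restrict Ω))
    (lam : ℝ) (u : Lp ℝ 2 (volume.restrict Ω))
    (hu : u ≠ 0) (heig : T u = lam • u) (hlam : |lam| = ‖T‖) :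
    (∀ᵐ x ∂(volume.restrict Ω), 0 < u x) ∨
    (∀ᵐ x ∂(volume.restrict Ω), u x < 0) := by
  haveI hμfin : IsFiniteMeasure (volume.restrict Ω : Measure (Xsp n)) :=
    ⟨by rw [Measure.restrict_apply_univ]; exact hΩb.measure_lt_top⟩
  -- kernel pointwise facts
  have hK0 : ∀ x y : Xsp n, 0 < K (dist x y) := fun x y => hKpos _ dist_nonneg
  have hKb : ∀ x y : Xsp n, K (dist x y) ≤ K 0 := fun x y => hKmono 0 _ le_rfl dist_nonneg
  have hKnorm : ∀ x y : Xsp n, ‖K (dist x y)‖ ≤ K 0 := fun x y => by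
    rw [Real.norm_eq_abs, abs_of_pos (hK0 x y)]; exact hKb x y
  -- kernel measurability
  have hKbm : Measurable (fun ρ : ℝ => K (max ρ 0)) := by
    apply Antitone.measurable
    intro a b hab
    exact hKmono _ _ (le_max_right a 0) (max_le_max hab le_rfl)
  have hKmeas2 : Measurable (fun p : Xsp n × Xsp n => K (dist p.1 p.2)) := by
    have h : (fun p : Xsp n × Xsp n => K (dist p.1 p.2)) = fun p => K (max (dist p.1 p.2) 0) := by
      funext p; rw [max_eq_left dist_nonneg]
    rw [h]; exact hKbm.comp measurable_dist
  have hKmeas1 : ∀ x : Xsp n, Measurable (fun y : Xsp n => K (dist x y)) := by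
    intro x
    have h : (fun y : Xsp n => K (dist x y)) = fun y => K (max (dist x y) 0) := by
      funext y; rw [max_eq_left dist_nonneg]
    rw [h]; exact hKbm.comp (measurable_const.dist measurable_id)
  -- integrability
  have hui : Integrable u (volume.restrict Ω) := (Lp.memLp u).integrable one_le_two
  -- distance bound on Ω
  obtain ⟨C, hC⟩ := Metric.isBounded_iff.1 hΩb
  set M := max C 0 with hM
  have hMd : ∀ {x y : Xsp n}, x ∈ Ω → y ∈ Ω → dist x y ≤ M := fun hx hy =>
    le_trans (hC hx hy) (le_max_left _ _)
  have hKM : ∀ {x y : Xsp n}, x ∈ Ω → y ∈ Ω → K M ≤ K (dist x y) := fun hx hy =>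
    hKmono _ _ dist_nonneg (hMd hx hy)
  have hKMpos : 0 < K M := hKpos _ (le_max_right _ _)
  -- integrability on the product
  have hprod : ∀ w : Xsp n → ℝ, Integrable w (volume.restrict Ω) →
      Integrable (fun p : Xsp n × Xsp n => K (dist p.1 p.2) * (w p.1 * w p.2)) ((volume.restrict Ω).prod (volume.restrict Ω)) := by
    intro w hw
    exact (hw.mul_prod hw).bdd_mul hKmeas2.aestronglyMeasurable (Filter.Eventually.of_forall fun p => hKnorm p.1 p.2)
  -- integrability of the inner kernel integral, for fixed x
  have hKint : ∀ (x : Xsp n) (w : Xsp n → ℝ), Integrable w (volume.restrict Ω) →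
      Integrable (fun y => K (dist x y) * w y) (volume.restrict Ω) := by
    intro x w hw
    exact hw.bdd_mul (hKmeas1 x).aestronglyMeasurable (Filter.Eventually.of_forall fun y => hKnorm x y)
  -- Fubini for iterated integrals
  have iter : ∀ w : Xsp n → ℝ, Integrable w (volume.restrict Ω) →
      (∫ x, (∫ y, K (dist x y) * w y ∂(volume.restrict Ω)) * w x ∂(volume.restrict Ω))
        = ∫ p, K (dist p.1 p.2) * (w p.1 * w p.2) ∂((volume.restrict Ω).prod (volume.restrict Ω)) := by
    intro w hw
    have h1 : (∫ x, (∫ y, K (dist x y) * w y ∂(volume.restrict Ω)) * w x ∂(volume.restrict Ω))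
        = ∫ x, ∫ y, K (dist x y) * w y * w x ∂(volume.restrict Ω) ∂(volume.restrict Ω) := by
      congr 1; funext x; exact (integral_mul_const (w x) _).symm
    rw [h1]
    have h2 : Integrable (Function.uncurry fun x y => K (dist x y) * w y * w x) ((volume.restrict Ω).prod (volume.restrict Ω)) := by
      have := hprod w hw
      have heq : (Function.uncurry fun x y => K (dist x y) * w y * w x)
          = fun p : Xsp n × Xsp n => K (dist p.1 p.2) * (w p.1 * w p.2) := by
        funext p; simp [Function.uncurry]; ring
      rw [heq]; exact this
    have h3 := integral_integral h2
    rw [h3]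
    congr 1; funext p; ring
  -- inner product formula on L²
  have hinner : ∀ f g : Lp ℝ 2 (volume.restrict Ω), (inner ℝ f g : ℝ) = ∫ x, f x * g x ∂(volume.restrict Ω) := by
    intro f g
    rw [MeasureTheory.L2.inner_def]
    simp [RCLike.inner_apply, mul_comm]
  have hnormu : 0 < ‖u‖ := norm_pos_iff.2 hu
  -- A : the bilinear value for u
  obtain ⟨Aint, hAdef⟩ : ∃ A : ℝ, A = ∫ p : Xsp n × Xsp n, K (dist p.1 p.2) * (u p.1 * u p.2) ∂((volume.restrict Ω).prod (volume.restrict Ω)) := ⟨_, rfl⟩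
  obtain ⟨Babs, hBdef⟩ : ∃ B : ℝ, B = ∫ p : Xsp n × Xsp n, K (dist p.1 p.2) * (|u p.1| * |u p.2|) ∂((volume.restrict Ω).prod (volume.restrict Ω)) := ⟨_, rfl⟩
  have hAeq : Aint = lam * (‖u‖ * ‖u‖) := by
    have h1 : (inner ℝ (T u) u : ℝ) = ∫ x, (T u) x * u x ∂(volume.restrict Ω) := hinner _ _
    have h2 : (∫ x, (T u) x * u x ∂(volume.restrict Ω)) = ∫ x, (∫ y, K (dist x y) * u y ∂(volume.restrict Ω)) * u x ∂(volume.restrict Ω) := by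
      apply integral_congr_ae
      filter_upwards [hT u] with x hx
      rw [hx]
    have h3 : (inner ℝ (T u) u : ℝ) = lam * (‖u‖ * ‖u‖) := by
      rw [heig, real_inner_smul_left, real_inner_self_eq_norm_mul_norm]
    rw [hAdef, ← iter _ hui, ← h2, ← h1, h3]
  -- Babs equals the inner product with |u|
  set v : Lp ℝ 2 (volume.restrict Ω) := |u| with hvdef
  have hv : ⇑v =ᵐ[(volume.restrict Ω)] fun x => |u x| := Lp.coeFn_abs u
  have hvi : Integrable (fun x => |u x|) (volume.restrict Ω) := hui.abs
  have hBeq : Babs = (inner ℝ (T v) v : ℝ) := by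
    have h1 : (inner ℝ (T v) v : ℝ) = ∫ x, (T v) x * v x ∂(volume.restrict Ω) := hinner _ _
    have h2 : (∫ x, (T v) x * v x ∂(volume.restrict Ω))
        = ∫ x, (∫ y, K (dist x y) * |u y| ∂(volume.restrict Ω)) * |u x| ∂(volume.restrict Ω) := by
      apply integral_congr_ae
      filter_upwards [hT v, hv] with x hx hvx
      rw [hx, hvx]
      congr 1
      apply integral_congr_ae
      filter_upwards [hv] with y hy
      rw [hy]
    rw [hBdef, ← iter _ hvi, ← h2, h1]
  have hBle : Babs ≤ ‖T‖ * (‖u‖ * ‖u‖) := by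
    rw [hBeq]
    calc (inner ℝ (T v) v : ℝ) ≤ ‖T v‖ * ‖v‖ := real_inner_le_norm _ _
      _ ≤ ‖T‖ * ‖v‖ * ‖v‖ := by
          apply mul_le_mul_of_nonneg_right (T.le_opNorm v) (norm_nonneg v)
      _ = ‖T‖ * (‖u‖ * ‖u‖) := by rw [hvdef, norm_abs_eq_norm]; ring
  -- |F u| = K * (|u|.|u|) pointwise
  have habsF : ∀ p : Xsp n × Xsp n, |K (dist p.1 p.2) * (u p.1 * u p.2)|
      = K (dist p.1 p.2) * (|u p.1| * |u p.2|) := by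
    intro p
    rw [abs_mul, abs_mul, abs_of_pos (hK0 p.1 p.2)]
  have habs_int : (∫ p : Xsp n × Xsp n, |K (dist p.1 p.2) * (u p.1 * u p.2)| ∂((volume.restrict Ω).prod (volume.restrict Ω))) = Babs := by
    rw [hBdef]; congr 1; funext p; exact habsF p
  have hAabs_le : |Aint| ≤ Babs := by
    calc |Aint| ≤ ∫ p : Xsp n × Xsp n, |K (dist p.1 p.2) * (u p.1 * u p.2)| ∂((volume.restrict Ω).prod (volume.restrict Ω)) := by
          rw [hAdef]
          have hn := norm_integral_le_integral_norm (μ := (volume.restrict Ω).prod (volume.restrict Ω))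
              (f := fun p : Xsp n × Xsp n => K (dist p.1 p.2) * (u p.1 * u p.2))
          simp only [Real.norm_eq_abs] at hn
          exact hn
      _ = Babs := habs_int
  have hchain : |Aint| = Babs := by
    have h1 : |Aint| = ‖T‖ * (‖u‖ * ‖u‖) := by
      rw [hAeq, abs_mul, abs_of_nonneg (by positivity : (0:ℝ) ≤ ‖u‖ * ‖u‖), hlam]
    linarith [hAabs_le, hBle, h1.ge, h1.le]
  -- strong measurability of u
  have hum : Measurable (⇑u) := (Lp.stronglyMeasurable u).measurable
  obtain ⟨P, hPdef⟩ : ∃ P : Set (Xsp n), P = {x | 0 < u x} := ⟨_, rfl⟩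
  obtain ⟨N, hNdef⟩ : ∃ N : Set (Xsp n), N = {x | u x < 0} := ⟨_, rfl⟩
  have hFint : Integrable (fun p : Xsp n × Xsp n => K (dist p.1 p.2) * (u p.1 * u p.2)) ((volume.restrict Ω).prod (volume.restrict Ω)) :=
    hprod _ hui
  have hFabs : Integrable (fun p : Xsp n × Xsp n => |K (dist p.1 p.2) * (u p.1 * u p.2)|) ((volume.restrict Ω).prod (volume.restrict Ω)) :=
    hFint.abs
  -- u not a.e. zero
  have hune : (volume.restrict Ω) {x | u x ≠ 0} ≠ 0 := by
    intro h0
    apply hu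
    apply Lp.ext (μ := volume.restrict Ω) (p := (2:ℝ≥0∞))
    have h1 : ⇑u =ᵐ[(volume.restrict Ω)] 0 := by
      rw [Filter.EventuallyEq, ae_iff]
      simpa using h0
    exact h1.trans (Lp.coeFn_zero ℝ 2 (volume.restrict Ω)).symm
  -- lam is positive
  have hlampos : 0 < lam := by
    by_contra hneg
    push_neg at hneg
    -- then Aint ≤ 0, so |Aint| = -Aint and ∫ (|F| + F) = 0
    have hA0 : Aint ≤ 0 := by
      rw [hAeq]
      exact mul_nonpos_of_nonpos_of_nonneg hneg (by positivity)
    have hzero : (∫ p : Xsp n × Xsp n, (|K (dist p.1 p.2) * (u p.1 * u p.2)|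
        + K (dist p.1 p.2) * (u p.1 * u p.2)) ∂((volume.restrict Ω).prod (volume.restrict Ω))) = 0 := by
      rw [integral_add hFabs hFint, habs_int, ← hAdef]
      have : |Aint| = -Aint := abs_of_nonpos hA0
      linarith [hchain, this]
    have hae : ∀ᵐ p ∂((volume.restrict Ω).prod (volume.restrict Ω)), (|K (dist p.1 p.2) * (u p.1 * u p.2)|
        + K (dist p.1 p.2) * (u p.1 * u p.2)) = 0 := by
      have hnn : 0 ≤ᵐ[(volume.restrict Ω).prod (volume.restrict Ω)] fun p : Xsp n × Xsp n => (|K (dist p.1 p.2) * (u p.1 * u p.2)|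
          + K (dist p.1 p.2) * (u p.1 * u p.2)) := by
        filter_upwards with p
        simp only [Pi.zero_apply]
        linarith [neg_abs_le (K (dist p.1 p.2) * (u p.1 * u p.2))]
      have := (integral_eq_zero_iff_of_nonneg_ae hnn (hFabs.add hFint)).1 hzero
      filter_upwards [this] with p hp
      simpa using hp
    have hnpos : ∀ᵐ p ∂((volume.restrict Ω).prod (volume.restrict Ω)), u p.1 * u p.2 ≤ 0 := by
      filter_upwards [hae] with p hp
      have hK := hK0 p.1 p.2
      rcases le_or_gt (u p.1 * u p.2) 0 with h | h
      · exact h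
      · exfalso
        have : 0 < K (dist p.1 p.2) * (u p.1 * u p.2) := mul_pos hK h
        rw [abs_of_pos this] at hp
        linarith
    have hbad : ((volume.restrict Ω).prod (volume.restrict Ω)) {p : Xsp n × Xsp n | 0 < u p.1 * u p.2} = 0 := by
      have := hnpos
      rw [ae_iff] at this
      convert this using 2
      ext p; simp [not_le]
    have hPP : (volume.restrict Ω) P * (volume.restrict Ω) P = 0 := by
      rw [← Measure.prod_prod]
      apply measure_mono_null _ hbad
      rintro ⟨x, y⟩ ⟨hx, hy⟩
      rw [hPdef] at hx hy
      simp only [Set.mem_setOf_eq] at hx hy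
      exact mul_pos hx hy
    have hNN : (volume.restrict Ω) N * (volume.restrict Ω) N = 0 := by
      rw [← Measure.prod_prod]
      apply measure_mono_null _ hbad
      rintro ⟨x, y⟩ ⟨hx, hy⟩
      rw [hNdef] at hx hy
      simp only [Set.mem_setOf_eq] at hx hy
      exact mul_pos_of_neg_of_neg hx hy
    have hP0 : (volume.restrict Ω) P = 0 := by
      rcases mul_eq_zero.1 hPP with h | h <;> exact h
    have hN0 : (volume.restrict Ω) N = 0 := by
      rcases mul_eq_zero.1 hNN with h | h <;> exact h
    apply hune
    apply measure_mono_null _ (measure_union_null hP0 hN0)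
    intro x hx
    rw [hPdef, hNdef]
    simp only [Set.mem_union, Set.mem_setOf_eq]
    rcases lt_or_gt_of_ne hx with h | h
    · exact Or.inr h
    · exact Or.inl h
  -- from the equality case: u p.1 * u p.2 ≥ 0 a.e. on the product
  have hApos : 0 ≤ Aint := by
    rw [hAeq]; positivity
  have hzero : (∫ p : Xsp n × Xsp n, (|K (dist p.1 p.2) * (u p.1 * u p.2)|
      - K (dist p.1 p.2) * (u p.1 * u p.2)) ∂((volume.restrict Ω).prod (volume.restrict Ω))) = 0 := by
    rw [integral_sub hFabs hFint, habs_int, ← hAdef]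
    have : |Aint| = Aint := abs_of_nonneg hApos
    linarith [hchain, this]
  have haepos : ∀ᵐ p ∂((volume.restrict Ω).prod (volume.restrict Ω)), 0 ≤ u p.1 * u p.2 := by
    have hnn : 0 ≤ᵐ[(volume.restrict Ω).prod (volume.restrict Ω)] fun p : Xsp n × Xsp n => (|K (dist p.1 p.2) * (u p.1 * u p.2)|
        - K (dist p.1 p.2) * (u p.1 * u p.2)) := by
      filter_upwards with p
      simp only [Pi.zero_apply]
      linarith [le_abs_self (K (dist p.1 p.2) * (u p.1 * u p.2))]
    have h := (integral_eq_zero_iff_of_nonneg_ae hnn (hFabs.sub hFint)).1 hzero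
    filter_upwards [h] with p hp
    simp only [Pi.zero_apply, sub_eq_zero] at hp
    have hK := hK0 p.1 p.2
    by_contra hc
    push_neg at hc
    have : K (dist p.1 p.2) * (u p.1 * u p.2) < 0 := mul_neg_of_pos_of_neg hK hc
    rw [abs_of_neg this] at hp
    linarith
  have hbad : ((volume.restrict Ω).prod (volume.restrict Ω)) {p : Xsp n × Xsp n | u p.1 * u p.2 < 0} = 0 := by
    have := haepos
    rw [ae_iff] at this
    convert this using 2
    ext p; simp [not_le]
  have hPN : (volume.restrict Ω) P * (volume.restrict Ω) N = 0 := by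
    rw [← Measure.prod_prod]
    apply measure_mono_null _ hbad
    rintro ⟨x, y⟩ ⟨hx, hy⟩
    rw [hPdef] at hx
    rw [hNdef] at hy
    simp only [Set.mem_setOf_eq] at hx hy
    exact mul_neg_of_pos_of_neg hx hy
  -- the positivity bootstrap
  have main : ∀ w : Lp ℝ 2 (volume.restrict Ω), w ≠ 0 → T w = lam • w → (∀ᵐ x ∂(volume.restrict Ω), 0 ≤ w x) →
      ∀ᵐ x ∂(volume.restrict Ω), 0 < w x := by
    intro w hw0 hweig hwpos
    have hwi : Integrable w (volume.restrict Ω) := (Lp.memLp w).integrable one_le_two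
    have hwsupp : (volume.restrict Ω) (Function.support fun x => w x) ≠ 0 := by
      intro h0
      apply hw0
      apply Lp.ext (μ := volume.restrict Ω) (p := (2:ℝ≥0∞))
      have h1 : ⇑w =ᵐ[(volume.restrict Ω)] 0 := by
        rw [Filter.EventuallyEq, ae_iff]
        simpa [Function.support] using h0
      exact h1.trans (Lp.coeFn_zero ℝ 2 (volume.restrict Ω)).symm
    have hint_pos : 0 < ∫ x, w x ∂(volume.restrict Ω) := by
      rw [integral_pos_iff_support_of_nonneg_ae hwpos hwi]
      exact pos_iff_ne_zero.2 hwsupp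
    have h1 : ∀ᵐ x ∂(volume.restrict Ω), lam * w x = ∫ y, K (dist x y) * w y ∂(volume.restrict Ω) := by
      filter_upwards [hT w, Lp.coeFn_smul lam w] with x hx1 hx2
      rw [hweig] at hx1
      rw [← hx1, hx2]
      simp
    have hxΩ : ∀ᵐ x ∂(volume.restrict Ω), x ∈ Ω := ae_restrict_mem hΩm
    filter_upwards [h1, hxΩ] with x hx hxm
    have hge : K M * ∫ y, w y ∂(volume.restrict Ω) ≤ ∫ y, K (dist x y) * w y ∂(volume.restrict Ω) := by
      rw [← integral_const_mul]
      apply integral_mono_ae (hwi.const_mul _) (hKint x _ hwi)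
      filter_upwards [hwpos, ae_restrict_mem hΩm] with y hy hym
      exact mul_le_mul_of_nonneg_right (hKM hxm hym) hy
    have hpos : 0 < lam * w x := lt_of_lt_of_le (mul_pos hKMpos hint_pos) (hx ▸ hge)
    nlinarith
  -- conclude
  rcases mul_eq_zero.1 hPN with hP0 | hN0
  · -- u ≤ 0 a.e. : use -u
    right
    have hnu : (-u : Lp ℝ 2 (volume.restrict Ω)) ≠ 0 := neg_ne_zero.2 hu
    have heig' : T (-u) = lam • (-u) := by rw [map_neg, heig, smul_neg]
    have hnonneg : ∀ᵐ x ∂(volume.restrict Ω), 0 ≤ (-u : Lp ℝ 2 (volume.restrict Ω)) x := by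
      have hnP : ∀ᵐ x ∂(volume.restrict Ω), x ∉ P := measure_eq_zero_iff_ae_notMem.1 hP0
      filter_upwards [Lp.coeFn_neg u, hnP] with x h1 h2
      rw [h1]
      simp only [Pi.neg_apply]
      rw [hPdef] at h2
      simp only [Set.mem_setOf_eq, not_lt] at h2
      linarith
    have := main (-u) hnu heig' hnonneg
    filter_upwards [this, Lp.coeFn_neg u] with x h1 h2
    rw [h2] at h1
    simp only [Pi.neg_apply] at h1
    linarith
  · -- u ≥ 0 a.e.
    left
    have hnonneg : ∀ᵐ x ∂(volume.restrict Ω), 0 ≤ u x := by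
      have hnN : ∀ᵐ x ∂(volume.restrict Ω), x ∉ N := measure_eq_zero_iff_ae_notMem.1 hN0
      filter_upwards [hnN] with x h2
      rw [hNdef] at h2
      simp only [Set.mem_setOf_eq, not_lt] at h2
      linarith
    exact main u hu heig hnonneg
end

section
/- Let Ω ⊆ ℝⁿ be a bounded measurable set of positive Lebesgue measure and K_Ω the associated convolution-type integral operator on L²(Ω) with positive non-increasing kernel K. Then the first eigenvalue λ₁ = ‖K_Ω‖ of K_Ω is simple: the eigenspace {u ∈ L²(Ω) : K_Ω u = ‖K_Ω‖ · u} is one-dimensional. -/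
open MeasureTheory Metric Module
open scoped RealInnerProductSpace

section Abstract

variable {E : Type*} [NormedAddCommGroup E] [InnerProductSpace ℝ E]

/-- A symmetric operator is bounded by the sup of its quadratic form. -/
theorem opNorm_le_of_quadratic (T : E →L[ℝ] E)
    (hsym : ∀ x y : E, ⟪T x, y⟫ = ⟪x, T y⟫) {M : ℝ} (hM0 : 0 ≤ M)
    (hM : ∀ x : E, |⟪T x, x⟫| ≤ M * ‖x‖ ^ 2) : ‖T‖ ≤ M := by
  refine T.opNorm_le_bound hM0 (fun x => ?_)
  rcases eq_or_ne (T x) 0 with h0 | h0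
  · simp [h0, mul_nonneg hM0 (norm_nonneg x)]
  have hx : x ≠ 0 := by rintro rfl; simp at h0
  set y : E := (‖x‖ / ‖T x‖) • T x with hy
  have hTx : (0:ℝ) < ‖T x‖ := norm_pos_iff.2 h0
  have hxn : (0:ℝ) < ‖x‖ := norm_pos_iff.2 hx
  have hyn : ‖y‖ = ‖x‖ := by
    rw [hy, norm_smul, Real.norm_eq_abs, abs_of_nonneg (by positivity)]
    field_simp
  have hTxy : ⟪T x, y⟫ = ‖x‖ * ‖T x‖ := by
    rw [hy, real_inner_smul_right, real_inner_self_eq_norm_sq]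
    field_simp
  have key : 4 * ⟪T x, y⟫ = ⟪T (x + y), x + y⟫ - ⟪T (x - y), x - y⟫ := by
    have h1 : ⟪T y, x⟫ = ⟪T x, y⟫ := by
      rw [hsym y x, real_inner_comm]
    simp only [map_add, map_sub, inner_add_add_self, inner_sub_sub_self,
      inner_add_left, inner_add_right, inner_sub_left, inner_sub_right]
    linarith [h1]
  have hpar : ‖x + y‖ ^ 2 + ‖x - y‖ ^ 2 = 2 * ‖x‖ ^ 2 + 2 * ‖y‖ ^ 2 := by
    rw [norm_add_sq_real, norm_sub_sq_real]; ring
  have hb : 4 * ⟪T x, y⟫ ≤ M * ‖x + y‖ ^ 2 + M * ‖x - y‖ ^ 2 := by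
    rw [key]
    have := hM (x + y)
    have := hM (x - y)
    have := abs_le.1 (hM (x + y))
    have := abs_le.1 (hM (x - y))
    linarith [(abs_le.1 (hM (x + y))).2, (abs_le.1 (hM (x - y))).1]
  rw [hTxy] at hb
  have : 4 * (‖x‖ * ‖T x‖) ≤ 4 * (M * ‖x‖ ^ 2) := by
    calc 4 * (‖x‖ * ‖T x‖) ≤ M * ‖x + y‖ ^ 2 + M * ‖x - y‖ ^ 2 := hb
    _ = M * (‖x + y‖ ^ 2 + ‖x - y‖ ^ 2) := by ring
    _ = M * (2 * ‖x‖ ^ 2 + 2 * ‖y‖ ^ 2) := by rw [hpar]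
    _ = 4 * (M * ‖x‖ ^ 2) := by rw [hyn]; ring
  have h2 : ‖x‖ * ‖T x‖ ≤ M * ‖x‖ ^ 2 := by linarith
  have := mul_le_mul_of_nonneg_left h2 (le_of_lt (inv_pos.2 hxn))
  calc ‖T x‖ = ‖x‖⁻¹ * (‖x‖ * ‖T x‖) := by field_simp
  _ ≤ ‖x‖⁻¹ * (M * ‖x‖ ^ 2) := this
  _ = M * ‖x‖ := by field_simp

end Abstract

section Abstract2

variable {E : Type*} [NormedAddCommGroup E] [InnerProductSpace ℝ E] [CompleteSpace E]

/-- A nonzero compact symmetric operator has an eigenvalue of absolute value `‖T‖`. -/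
theorem exists_eigen_norm (T : E →L[ℝ] E) (hcomp : IsCompactOperator T)
    (hsym : ∀ x y : E, ⟪T x, y⟫ = ⟪x, T y⟫) (hT0 : T ≠ 0) :
    ∃ (l : ℝ) (u : E), ‖u‖ = 1 ∧ |l| = ‖T‖ ∧ T u = l • u := by
  set N := ‖T‖ with hN
  have hNpos : 0 < N := norm_pos_iff.2 hT0
  -- a maximizing sequence of unit vectors
  have hseq : ∀ m : ℕ, ∃ u : E, ‖u‖ = 1 ∧ N - N / (m + 2) < |⟪T u, u⟫| := by
    intro m
    have hMlt : N - N / (m + 2) < N := by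
      have : (0:ℝ) < N / (m + 2) := by positivity
      linarith
    have hM0 : 0 ≤ N - N / (m + 2) := by
      have h2 : (1:ℝ) ≤ (m:ℝ) + 2 := by
        have : (0:ℝ) ≤ (m:ℝ) := Nat.cast_nonneg m
        linarith
      have : N / (m + 2) ≤ N / 1 := by
        apply div_le_div_of_nonneg_left hNpos.le (by norm_num) h2
      simp at this
      linarith
    by_contra hcon
    push_neg at hcon
    have : N ≤ N - N / (m + 2) := by
      refine opNorm_le_of_quadratic T hsym hM0 (fun x => ?_)
      rcases eq_or_ne x 0 with rfl | hx
      · simp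
      · have hx1 : ‖(‖x‖⁻¹ • x)‖ = 1 := by
          have hxn : (0:ℝ) < ‖x‖ := norm_pos_iff.2 hx
          rw [norm_smul, Real.norm_eq_abs, abs_of_nonneg (by positivity)]
          field_simp
        have := hcon (‖x‖⁻¹ • x) hx1
        rw [T.map_smul, real_inner_smul_left, real_inner_smul_right] at this
        have hxn : (0:ℝ) < ‖x‖ := norm_pos_iff.2 hx
        rw [abs_mul, abs_mul, abs_of_nonneg (inv_nonneg.2 hxn.le)] at this
        have h2 : |⟪T x, x⟫| ≤ (N - N / (m + 2)) * (‖x‖ * ‖x‖) := by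
          have := mul_le_mul_of_nonneg_left this (by positivity : (0:ℝ) ≤ ‖x‖ * ‖x‖)
          calc |⟪T x, x⟫| = (‖x‖ * ‖x‖) * (‖x‖⁻¹ * (‖x‖⁻¹ * |⟪T x, x⟫|)) := by
                field_simp
          _ ≤ (‖x‖ * ‖x‖) * (N - N / (m + 2)) := this
          _ = (N - N / (m + 2)) * (‖x‖ * ‖x‖) := by ring
        calc |⟪T x, x⟫| ≤ (N - N / (m + 2)) * (‖x‖ * ‖x‖) := h2
        _ = (N - N / (m + 2)) * ‖x‖ ^ 2 := by ring_nf
    linarith [hMlt]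
  choose u hu1 hu2 using hseq
  set a : ℕ → ℝ := fun m => ⟪T (u m), u m⟫ with ha
  have habs : ∀ m, |a m| ≤ N := by
    intro m
    calc |a m| ≤ ‖T (u m)‖ * ‖u m‖ := abs_real_inner_le_norm _ _
    _ ≤ ‖T‖ * ‖u m‖ * ‖u m‖ := by
        gcongr
        exact T.le_opNorm _
    _ = N := by rw [hu1]; ring
  have hmem : ∀ m, a m ∈ Set.Icc (-N) N := fun m => abs_le.1 (habs m)
  obtain ⟨l, hlmem, φ, hφ, hconv⟩ := (isCompact_Icc).tendsto_subseq hmem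
  have hφ' : Filter.Tendsto φ Filter.atTop Filter.atTop := hφ.tendsto_atTop
  have hconvabs : Filter.Tendsto (fun m => |a (φ m)|) Filter.atTop (nhds |l|) :=
    hconv.abs
  have hlow : Filter.Tendsto (fun m : ℕ => N - N / ((φ m : ℝ) + 2)) Filter.atTop (nhds N) := by
    have h0 : Filter.Tendsto (fun m : ℕ => N / ((m : ℝ) + 2)) Filter.atTop (nhds 0) := by
      apply Filter.Tendsto.div_atTop (tendsto_const_nhds)
      exact Filter.tendsto_atTop_add_const_right _ 2 tendsto_natCast_atTop_atTop
    have h1 := (h0.comp hφ').const_sub N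
    simpa using h1
  have hNl : |l| = N := by
    have hge : N ≤ |l| := by
      refine le_of_tendsto_of_tendsto' hlow hconvabs (fun m => ?_)
      exact (hu2 (φ m)).le
    have hle : |l| ≤ N := by
      refine le_of_tendsto' hconvabs (fun m => habs (φ m))
    linarith
  have hl0 : l ≠ 0 := by
    intro h
    rw [h] at hNl
    simp at hNl
    linarith [hNl ▸ hNpos]
  -- the approximate eigenvector property
  have hb2 : Filter.Tendsto (fun m => ‖T (u (φ m)) - l • u (φ m)‖ ^ 2) Filter.atTop (nhds 0) := by
    have hub : ∀ m, ‖T (u (φ m)) - l • u (φ m)‖ ^ 2 ≤ N ^ 2 + l ^ 2 - 2 * l * a (φ m) := by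
      intro m
      have hexp : ‖T (u (φ m)) - l • u (φ m)‖ ^ 2
          = ‖T (u (φ m))‖ ^ 2 - 2 * (l * a (φ m)) + l ^ 2 := by
        rw [norm_sub_sq_real, real_inner_smul_right, norm_smul, Real.norm_eq_abs]
        rw [hu1 (φ m)]
        rw [mul_pow, sq_abs]
        ring
      have hTn : ‖T (u (φ m))‖ ≤ N := by
        have := T.le_opNorm (u (φ m))
        rw [hu1 (φ m)] at this
        simpa using this
      have : ‖T (u (φ m))‖ ^ 2 ≤ N ^ 2 := by
        have h0 : (0:ℝ) ≤ ‖T (u (φ m))‖ := norm_nonneg _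
        nlinarith
      rw [hexp]
      linarith
    have hrhs : Filter.Tendsto (fun m => N ^ 2 + l ^ 2 - 2 * l * a (φ m))
        Filter.atTop (nhds 0) := by
      have h1 := (hconv.const_mul (2 * l)).const_sub (N ^ 2 + l ^ 2)
      have h2 : N ^ 2 + l ^ 2 - 2 * l * l = 0 := by
        have : l ^ 2 = N ^ 2 := by
          rw [← sq_abs l, hNl]
        nlinarith
      rw [h2] at h1
      exact h1
    refine tendsto_of_tendsto_of_tendsto_of_le_of_le tendsto_const_nhds hrhs
      (fun m => by positivity) hub
  have hb : Filter.Tendsto (fun m => ‖T (u (φ m)) - l • u (φ m)‖) Filter.atTop (nhds 0) := by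
    have := (Real.continuous_sqrt.tendsto 0).comp hb2
    simp only [Real.sqrt_zero] at this
    refine this.congr (fun m => ?_)
    simp [Function.comp, Real.sqrt_sq (norm_nonneg _)]
  -- compactness: extract convergent subsequence of T (u (φ m))
  have hKcomp : IsCompact (closure ((T : E →ₗ[ℝ] E) '' Metric.closedBall 0 1)) := by
    have : IsCompactOperator (T : E →ₗ[ℝ] E) := hcomp
    exact this.isCompact_closure_image_closedBall (𝕜₁ := ℝ) 1
  have hmemK : ∀ m, T (u (φ m)) ∈ closure ((T : E →ₗ[ℝ] E) '' Metric.closedBall 0 1) := by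
    intro m
    apply subset_closure
    exact ⟨u (φ m), by simp [Metric.mem_closedBall, (hu1 (φ m)).le], rfl⟩
  obtain ⟨y, _, ψ, hψ, hyconv⟩ := hKcomp.tendsto_subseq hmemK
  -- then u (φ (ψ m)) converges to l⁻¹ • y
  have hucv : Filter.Tendsto (fun m => u (φ (ψ m))) Filter.atTop (nhds (l⁻¹ • y)) := by
    have hdiff : Filter.Tendsto (fun m => T (u (φ (ψ m))) - l • u (φ (ψ m))) Filter.atTop
        (nhds 0) := by
      have := hb.comp hψ.tendsto_atTop
      exact tendsto_zero_iff_norm_tendsto_zero.2 this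
    have hlu : Filter.Tendsto (fun m => l • u (φ (ψ m))) Filter.atTop (nhds y) := by
      have := hyconv.sub hdiff
      simpa using this
    exact (hlu.const_smul l⁻¹).congr (fun m => by rw [inv_smul_smul₀ hl0])
  refine ⟨l, l⁻¹ • y, ?_, hNl, ?_⟩
  · have := (continuous_norm.tendsto _).comp hucv
    have h1 : Filter.Tendsto (fun m => ‖u (φ (ψ m))‖) Filter.atTop (nhds ‖l⁻¹ • y‖) := this
    have h2 : Filter.Tendsto (fun m => ‖u (φ (ψ m))‖) Filter.atTop (nhds 1) := by
      refine tendsto_const_nhds.congr (fun m => ?_)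
      rw [hu1]
    exact tendsto_nhds_unique h1 h2
  · have hTcv : Filter.Tendsto (fun m => T (u (φ (ψ m)))) Filter.atTop (nhds (T (l⁻¹ • y))) :=
      (T.continuous.tendsto _).comp hucv
    have h2 : T (l⁻¹ • y) = y := tendsto_nhds_unique hTcv hyconv
    rw [h2]
    rw [smul_smul, mul_inv_cancel₀ hl0, one_smul]


/-- If the quadratic form attains the value `‖T‖ * ‖v‖²` at `v ≠ 0`, then `v` is an
eigenvector with eigenvalue `‖T‖`. -/
theorem eig_of_quadratic_max (T : E →L[ℝ] E) (hsa : IsSelfAdjoint T) {v : E} (hv : v ≠ 0)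
    (heq : ⟪T v, v⟫ = ‖T‖ * ‖v‖ ^ 2) : T v = ‖T‖ • v := by
  have hmax : IsMaxOn T.reApplyInnerSelf (Metric.sphere 0 ‖v‖) v := by
    intro x hx
    have hxn : ‖x‖ = ‖v‖ := by simpa using hx
    have h1 : ⟪T x, x⟫ ≤ ‖T‖ * ‖v‖ ^ 2 := by
      calc ⟪T x, x⟫ ≤ ‖T x‖ * ‖x‖ := real_inner_le_norm _ _
      _ ≤ ‖T‖ * ‖x‖ * ‖x‖ := by gcongr; exact T.le_opNorm _
      _ = ‖T‖ * ‖v‖ ^ 2 := by rw [hxn]; ring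
    simpa [ContinuousLinearMap.reApplyInnerSelf, heq] using h1
  have := hsa.eq_smul_self_of_isLocalExtrOn (Or.inr hmax.localize)
  rw [this]
  congr 1
  have hvn : (0:ℝ) < ‖v‖ := norm_pos_iff.2 hv
  simp only [ContinuousLinearMap.rayleighQuotient, ContinuousLinearMap.reApplyInnerSelf]
  rw [show RCLike.re (inner ℝ (T v) v : ℝ) = ⟪T v, v⟫ from rfl, heq]
  field_simp
  rfl

end Abstract2


section Kernel

variable {X : Type*} [MeasurableSpace X] {μ : Measure X} [IsFiniteMeasure μ]
variable {k : X → X → ℝ} {C : ℝ}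

theorem lp_integrable (f : Lp ℝ 2 μ) : Integrable (⇑f) μ :=
  (Lp.memLp f).integrable one_le_two

theorem kernel_prod_integrable (hkm : Measurable (Function.uncurry k))
    (hub : ∀ x y, |k x y| ≤ C) (f g : Lp ℝ 2 μ) :
    Integrable (fun p : X × X => k p.1 p.2 * (f p.2 * g p.1)) (μ.prod μ) := by
  have hfi : Integrable (⇑f) μ := lp_integrable f
  have hgi : Integrable (⇑g) μ := lp_integrable g
  have hprod : Integrable (fun p : X × X => g p.1 * f p.2) (μ.prod μ) :=
    hgi.mul_prod hfi
  have hbound : Integrable (fun p : X × X => C * |g p.1 * f p.2|) (μ.prod μ) :=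
    (hprod.abs).const_mul C
  refine hbound.mono' ?_ ?_
  · exact (hkm.aestronglyMeasurable).mul
      (((Lp.aestronglyMeasurable f).comp_snd).mul ((Lp.aestronglyMeasurable g).comp_fst))
  · refine Filter.Eventually.of_forall (fun p => ?_)
    have h1 : |k p.1 p.2| ≤ C := hub _ _
    have h0 : (0:ℝ) ≤ |g p.1 * f p.2| := abs_nonneg _
    calc ‖k p.1 p.2 * (f p.2 * g p.1)‖ = |k p.1 p.2| * |f p.2 * g p.1| := by
          rw [Real.norm_eq_abs, abs_mul]
    _ ≤ C * |f p.2 * g p.1| := by gcongr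
    _ = C * |g p.1 * f p.2| := by rw [mul_comm (f p.2)]

variable (T : Lp ℝ 2 μ →L[ℝ] Lp ℝ 2 μ)

theorem inner_T_eq (hT : ∀ f : Lp ℝ 2 μ, ∀ᵐ x ∂μ, T f x = ∫ y, k x y * f y ∂μ)
    (f g : Lp ℝ 2 μ) :
    (inner ℝ (T f) g : ℝ) = ∫ x, (∫ y, k x y * f y ∂μ) * g x ∂μ := by
  rw [MeasureTheory.L2.inner_def]
  refine integral_congr_ae ?_
  filter_upwards [hT f] with x hx
  rw [RCLike.inner_apply', hx]
  simp

theorem inner_T_prod (hkm : Measurable (Function.uncurry k))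
    (hub : ∀ x y, |k x y| ≤ C)
    (hT : ∀ f : Lp ℝ 2 μ, ∀ᵐ x ∂μ, T f x = ∫ y, k x y * f y ∂μ)
    (f g : Lp ℝ 2 μ) :
    (inner ℝ (T f) g : ℝ) = ∫ p : X × X, k p.1 p.2 * (f p.2 * g p.1) ∂(μ.prod μ) := by
  rw [inner_T_eq T hT f g]
  rw [MeasureTheory.integral_prod _ (kernel_prod_integrable hkm hub f g)]
  refine integral_congr_ae (Filter.Eventually.of_forall (fun x => ?_))
  show (∫ y, k x y * f y ∂μ) * g x = ∫ y, k x y * (f y * g x) ∂μ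
  rw [← integral_mul_const]
  refine integral_congr_ae (Filter.Eventually.of_forall (fun y => ?_))
  ring

theorem T_symm (hkm : Measurable (Function.uncurry k))
    (hub : ∀ x y, |k x y| ≤ C) (hsymm : ∀ x y, k x y = k y x)
    (hT : ∀ f : Lp ℝ 2 μ, ∀ᵐ x ∂μ, T f x = ∫ y, k x y * f y ∂μ)
    (f g : Lp ℝ 2 μ) :
    (inner ℝ (T f) g : ℝ) = inner ℝ f (T g) := by
  rw [real_inner_comm (T g) f, inner_T_prod T hkm hub hT f g, inner_T_prod T hkm hub hT g f]
  rw [← MeasureTheory.integral_prod_swap]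
  refine integral_congr_ae (Filter.Eventually.of_forall (fun p => ?_))
  simp only [Prod.fst_swap, Prod.snd_swap, Prod.swap]
  rw [hsymm p.2 p.1]
  ring

theorem integral_pos_of_ae_pos {X : Type*} [MeasurableSpace X] {μ : Measure X}
    {f : X → ℝ} (hμ : 0 < μ Set.univ) (hf : ∀ᵐ x ∂μ, 0 < f x) (hfi : Integrable f μ) :
    0 < ∫ x, f x ∂μ := by
  rw [integral_pos_iff_support_of_nonneg_ae (hf.mono (fun x hx => hx.le)) hfi]
  have hcompl : μ (Function.support f)ᶜ = 0 := by
    rw [ae_iff] at hf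
    refine measure_mono_null ?_ hf
    intro x hx
    simp only [Function.mem_support, Set.mem_compl_iff, not_not] at hx
    simp [hx]
  have hle : μ Set.univ ≤ μ (Function.support f) + μ (Function.support f)ᶜ := by
    rw [← Set.union_compl_self (Function.support f)]
    exact measure_union_le _ _
  rw [hcompl, add_zero] at hle
  exact lt_of_lt_of_le hμ hle

theorem T_pos_improving (hkm : Measurable (Function.uncurry k))
    (hub : ∀ x y, |k x y| ≤ C) {c : ℝ} (hc : 0 < c)
    (hlb : ∀ᵐ x ∂μ, ∀ᵐ y ∂μ, c ≤ k x y)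
    (hT : ∀ f : Lp ℝ 2 μ, ∀ᵐ x ∂μ, T f x = ∫ y, k x y * f y ∂μ)
    (f : Lp ℝ 2 μ) (hf : 0 ≤ᵐ[μ] ⇑f) (hf0 : ¬ (⇑f =ᵐ[μ] (0 : X → ℝ))) :
    ∀ᵐ x ∂μ, 0 < T f x := by
  have hfi : Integrable (⇑f) μ := lp_integrable f
  have hint : 0 < ∫ x, f x ∂μ := by
    rw [integral_pos_iff_support_of_nonneg_ae hf hfi]
    rw [pos_iff_ne_zero]
    intro hsup
    refine hf0 ?_
    rw [Filter.EventuallyEq, ae_iff]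
    simpa [Function.support] using hsup
  filter_upwards [hT f, hlb] with x hx hxl
  rw [hx]
  have hky : Measurable (k x) := hkm.of_uncurry_left
  have Ix : Integrable (fun y => k x y * f y) μ := by
    refine ((hfi.abs).const_mul C).mono'
      (hky.aestronglyMeasurable.mul (Lp.aestronglyMeasurable f)) ?_
    refine Filter.Eventually.of_forall (fun y => ?_)
    rw [Real.norm_eq_abs, abs_mul]
    exact mul_le_mul_of_nonneg_right (hub x y) (abs_nonneg _)
  have hmono : ∫ y, c * f y ∂μ ≤ ∫ y, k x y * f y ∂μ := by
    refine integral_mono_ae (hfi.const_mul c) Ix ?_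
    filter_upwards [hxl, hf] with y h1 h2
    exact mul_le_mul_of_nonneg_right h1 h2
  rw [integral_const_mul] at hmono
  have : 0 < c * ∫ y, f y ∂μ := mul_pos hc hint
  linarith

theorem lp_norm_abs (f : Lp ℝ 2 μ) : ‖|f|‖ = ‖f‖ := by
  rw [Lp.norm_def, Lp.norm_def]
  congr 1
  calc eLpNorm (⇑|f|) 2 μ = eLpNorm (fun x => |f x|) 2 μ :=
        eLpNorm_congr_ae (Lp.coeFn_abs f)
  _ = eLpNorm (⇑f) 2 μ := by
      simp_rw [← Real.norm_eq_abs]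
      exact eLpNorm_norm _

theorem inner_pos_of_ae_pos (hμ : 0 < μ Set.univ) (f g : Lp ℝ 2 μ)
    (hf : ∀ᵐ x ∂μ, 0 < f x) (hg : ∀ᵐ x ∂μ, 0 < g x) :
    (0:ℝ) < inner ℝ f g := by
  rw [MeasureTheory.L2.inner_def]
  have hfi : Integrable (fun x => (inner ℝ (f x) (g x) : ℝ)) μ :=
    MeasureTheory.L2.integrable_inner f g
  refine integral_pos_of_ae_pos hμ ?_ hfi
  filter_upwards [hf, hg] with x h1 h2
  simpa [RCLike.inner_apply] using mul_pos h2 h1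

theorem abs_inner_T_le (hkm : Measurable (Function.uncurry k))
    (hub : ∀ x y, |k x y| ≤ C) (hknn : ∀ x y, 0 ≤ k x y)
    (hT : ∀ f : Lp ℝ 2 μ, ∀ᵐ x ∂μ, T f x = ∫ y, k x y * f y ∂μ)
    (f : Lp ℝ 2 μ) :
    |(inner ℝ (T f) f : ℝ)| ≤ (inner ℝ (T |f|) |f| : ℝ) := by
  rw [inner_T_eq T hT f f, inner_T_eq T hT |f| |f|]
  have habs := Lp.coeFn_abs f
  -- rewrite the RHS using |f|'s pointwise values
  have hRHS : ∫ x, (∫ y, k x y * (|f| : Lp ℝ 2 μ) y ∂μ) * (|f| : Lp ℝ 2 μ) x ∂μ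
      = ∫ x, (∫ y, k x y * |f y| ∂μ) * |f x| ∂μ := by
    refine integral_congr_ae ?_
    filter_upwards [habs] with x hx
    rw [hx]
    congr 1
    refine integral_congr_ae ?_
    filter_upwards [habs] with y hy
    rw [hy]
  rw [hRHS]
  -- integrability of the RHS integrand
  have hTabs := hT (|f| : Lp ℝ 2 μ)
  have hint : Integrable (fun x => (∫ y, k x y * |f y| ∂μ) * |f x|) μ := by
    have h1 : Integrable (fun x => (inner ℝ ((T (|f|:Lp ℝ 2 μ)) x) ((|f|:Lp ℝ 2 μ) x) : ℝ)) μ :=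
      MeasureTheory.L2.integrable_inner _ _
    refine h1.congr ?_
    filter_upwards [hTabs, habs] with x h2 h3
    rw [RCLike.inner_apply', h2, h3]
    have : ∫ y, k x y * (|f|:Lp ℝ 2 μ) y ∂μ = ∫ y, k x y * |f y| ∂μ := by
      refine integral_congr_ae ?_
      filter_upwards [habs] with y hy
      rw [hy]
    rw [this]
    simp
  calc |∫ x, (∫ y, k x y * f y ∂μ) * f x ∂μ|
      ≤ ∫ x, |∫ y, k x y * f y ∂μ| * |f x| ∂μ := by
        simpa [Real.norm_eq_abs, abs_mul] using
          norm_integral_le_integral_norm (fun x => (∫ y, k x y * f y ∂μ) * f x) (μ := μ)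
  _ ≤ ∫ x, (∫ y, k x y * |f y| ∂μ) * |f x| ∂μ := by
      refine integral_mono_of_nonneg
        (Filter.Eventually.of_forall (fun x => mul_nonneg (abs_nonneg _) (abs_nonneg _)))
        hint (Filter.Eventually.of_forall (fun x => ?_))
      show |∫ y, k x y * f y ∂μ| * |f x| ≤ (∫ y, k x y * |f y| ∂μ) * |f x|
      refine mul_le_mul_of_nonneg_right ?_ (abs_nonneg _)
      calc |∫ y, k x y * f y ∂μ| ≤ ∫ y, |k x y| * |f y| ∂μ := by
            simpa [Real.norm_eq_abs, abs_mul] using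
              norm_integral_le_integral_norm (fun y => k x y * f y) (μ := μ)
      _ = ∫ y, k x y * |f y| ∂μ := by
          refine integral_congr_ae (Filter.Eventually.of_forall (fun y => ?_))
          show |k x y| * |f y| = k x y * |f y|
          rw [abs_of_nonneg (hknn x y)]

end Kernel

set_option maxHeartbeats 2000000 in
set_option synthInstance.maxHeartbeats 200000 in
theorem first_eigen_aux {X : Type*} [MeasurableSpace X] {μ : Measure X} [IsFiniteMeasure μ]
    (hμuniv : 0 < μ Set.univ)
    {k : X → X → ℝ} {C : ℝ}
    (hkm : Measurable (Function.uncurry k))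
    (hub : ∀ x y, |k x y| ≤ C)
    (hknn : ∀ x y, 0 ≤ k x y)
    (hksymm : ∀ x y, k x y = k y x)
    {c : ℝ} (hc : 0 < c)
    (hlb : ∀ᵐ x ∂μ, ∀ᵐ y ∂μ, c ≤ k x y)
    (T : Lp ℝ 2 μ →L[ℝ] Lp ℝ 2 μ)
    (hTcomp : IsCompactOperator T)
    (hT' : ∀ f : Lp ℝ 2 μ, ∀ᵐ x ∂μ, T f x = ∫ y, k x y * f y ∂μ) :
    Module.finrank ℝ
      ↥(Module.End.eigenspace (T : Lp ℝ 2 μ →ₗ[ℝ] Lp ℝ 2 μ) ‖T‖) = 1 := by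
  classical
  haveI : (ae μ).NeBot := ae_neBot.2 (by
    intro h
    rw [h] at hμuniv
    simp at hμuniv)
  have hsym : ∀ f g : Lp ℝ 2 μ, (inner ℝ (T f) g : ℝ) = inner ℝ f (T g) :=
    fun f g => T_symm T hkm hub hksymm hT' f g
  have hsa : IsSelfAdjoint T := by
    rw [ContinuousLinearMap.isSelfAdjoint_iff_isSymmetric]
    intro f g
    exact hsym f g
  -- T is nonzero
  set one : Lp ℝ 2 μ := (memLp_const (1:ℝ)).toLp (fun _ => (1:ℝ)) with honedef
  have hone : ⇑one =ᵐ[μ] fun _ => (1:ℝ) := (memLp_const (1:ℝ)).coeFn_toLp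
  have honenn : 0 ≤ᵐ[μ] ⇑one := by
    filter_upwards [hone] with x hx
    rw [hx]; norm_num
  have honene : ¬(⇑one =ᵐ[μ] (0 : X → ℝ)) := by
    intro h
    have h2 : (fun _ : X => (1:ℝ)) =ᵐ[μ] (fun _ => (0:ℝ)) :=
      hone.symm.trans h
    have h3 := h2.exists
    obtain ⟨x, hx⟩ := h3
    norm_num at hx
  have hTone := T_pos_improving T hkm hub hc hlb hT' one honenn honene
  have hT0 : T ≠ 0 := by
    intro h
    have hz : ⇑(T one) =ᵐ[μ] (0 : X → ℝ) := by
      rw [h]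
      simpa using Lp.coeFn_zero (E := ℝ) (p := 2) (μ := μ)
    have := (hTone.and hz).exists
    obtain ⟨x, h1, h2⟩ := this
    rw [h2] at h1
    exact lt_irrefl _ h1
  have hNpos : (0:ℝ) < ‖T‖ := norm_pos_iff.2 hT0
  -- eigenvector with |l| = ‖T‖
  obtain ⟨l, u, hu1, hl, hTu⟩ := exists_eigen_norm T hTcomp hsym hT0
  -- |u| is an eigenfunction for ‖T‖
  have habs_norm : ∀ w : Lp ℝ 2 μ, ‖(|w| : Lp ℝ 2 μ)‖ = ‖w‖ := lp_norm_abs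
  have quad_ub : ∀ w : Lp ℝ 2 μ, (inner ℝ (T w) w : ℝ) ≤ ‖T‖ * ‖w‖ ^ 2 := by
    intro w
    calc (inner ℝ (T w) w : ℝ) ≤ ‖T w‖ * ‖w‖ := real_inner_le_norm _ _
    _ ≤ ‖T‖ * ‖w‖ * ‖w‖ := by gcongr; exact T.le_opNorm _
    _ = ‖T‖ * ‖w‖ ^ 2 := by ring
  have abs_eig : ∀ w : Lp ℝ 2 μ, T w = ‖T‖ • w → w ≠ 0 →
      T (|w| : Lp ℝ 2 μ) = ‖T‖ • (|w| : Lp ℝ 2 μ) := by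
    intro w hw hwne
    have hwn : (0:ℝ) < ‖w‖ := norm_pos_iff.2 hwne
    have hinnw : (inner ℝ (T w) w : ℝ) = ‖T‖ * ‖w‖ ^ 2 := by
      rw [hw, real_inner_smul_left, real_inner_self_eq_norm_sq]
    have h1 : ‖T‖ * ‖(|w| : Lp ℝ 2 μ)‖ ^ 2 ≤ (inner ℝ (T (|w| : Lp ℝ 2 μ)) (|w| : Lp ℝ 2 μ) : ℝ) := by
      rw [habs_norm w]
      have := abs_inner_T_le T hkm hub hknn hT' w
      rw [hinnw] at this
      have h2 : |‖T‖ * ‖w‖ ^ 2| = ‖T‖ * ‖w‖ ^ 2 := abs_of_nonneg (by positivity)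
      rw [h2] at this
      exact this
    have h2 : (inner ℝ (T (|w| : Lp ℝ 2 μ)) (|w| : Lp ℝ 2 μ) : ℝ) ≤ ‖T‖ * ‖(|w| : Lp ℝ 2 μ)‖ ^ 2 :=
      quad_ub (|w| : Lp ℝ 2 μ)
    have habsne : (|w| : Lp ℝ 2 μ) ≠ 0 := by
      intro h
      have := habs_norm w
      rw [h, norm_zero] at this
      exact hwn.ne (this)
    refine eig_of_quadratic_max T hsa habsne ?_
    exact le_antisymm h2 h1
  have abs_pos : ∀ w : Lp ℝ 2 μ, T w = ‖T‖ • w → w ≠ 0 →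
      ∀ᵐ x ∂μ, 0 < (|w| : Lp ℝ 2 μ) x := by
    intro w hw hwne
    have hTw' := abs_eig w hw hwne
    have habsnn : 0 ≤ᵐ[μ] ⇑(|w| : Lp ℝ 2 μ) := by
      filter_upwards [Lp.coeFn_abs w] with x hx
      rw [hx]; exact abs_nonneg _
    have habsne0 : ¬(⇑(|w| : Lp ℝ 2 μ) =ᵐ[μ] (0 : X → ℝ)) := by
      intro h
      have : (|w| : Lp ℝ 2 μ) = 0 := Lp.eq_zero_iff_ae_eq_zero.2 h
      have h2 := habs_norm w
      rw [this, norm_zero] at h2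
      exact (norm_pos_iff.2 hwne).ne h2
    have hTabspos := T_pos_improving T hkm hub hc hlb hT' _ habsnn habsne0
    filter_upwards [hTabspos, Lp.coeFn_smul ‖T‖ (|w| : Lp ℝ 2 μ), Filter.EventuallyEq.refl _ (⇑(T _))] with x h1 h2 _
    have h3 : (⇑(T (|w| : Lp ℝ 2 μ))) x = ‖T‖ * (|w| : Lp ℝ 2 μ) x := by
      rw [hTw', h2]; simp only [Pi.smul_apply, smul_eq_mul]
    rw [h3] at h1
    nlinarith
  have sign : ∀ w : Lp ℝ 2 μ, T w = ‖T‖ • w → w ≠ 0 →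
      (∀ᵐ x ∂μ, 0 < w x) ∨ (∀ᵐ x ∂μ, w x < 0) := by
    intro w hw hwne
    have habspos := abs_pos w hw hwne
    have hTw' := abs_eig w hw hwne
    set wp : Lp ℝ 2 μ := |w| + w with hwpdef
    have hwp : T wp = ‖T‖ • wp := by
      rw [hwpdef, map_add, hTw', hw, smul_add]
    by_cases hcase : wp = 0
    · right
      have h0 : ⇑wp =ᵐ[μ] (0 : X → ℝ) :=
        Lp.eq_zero_iff_ae_eq_zero.1 hcase
      filter_upwards [h0, Lp.coeFn_add (|w| : Lp ℝ 2 μ) w, Lp.coeFn_abs w, habspos]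
        with x h1 h2 h3 h4
      rw [hwpdef] at h1
      rw [h2] at h1
      simp only [Pi.add_apply, Pi.zero_apply] at h1
      rw [h3] at h4 h1
      linarith [abs_nonneg (w x), h1, h4]
    · left
      have hwpnn : 0 ≤ᵐ[μ] ⇑wp := by
        filter_upwards [Lp.coeFn_add (|w| : Lp ℝ 2 μ) w, Lp.coeFn_abs w] with x h2 h3
        rw [hwpdef, h2]
        simp only [Pi.add_apply]
        rw [h3]
        simp only [Pi.zero_apply]
        have := abs_nonneg (w x)
        have := neg_abs_le (w x)
        linarith
      have hwpne0 : ¬(⇑wp =ᵐ[μ] (0 : X → ℝ)) := by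
        intro h
        exact hcase (Lp.eq_zero_iff_ae_eq_zero.2 h)
      have hTwp := T_pos_improving T hkm hub hc hlb hT' wp hwpnn hwpne0
      filter_upwards [hTwp, Lp.coeFn_smul ‖T‖ wp, Lp.coeFn_add (|w| : Lp ℝ 2 μ) w,
        Lp.coeFn_abs w] with x h1 h2 h3 h4
      have h5 : (⇑(T wp)) x = ‖T‖ * wp x := by
        rw [hwp, h2]; simp only [Pi.smul_apply, smul_eq_mul]
      rw [h5] at h1
      have h6 : 0 < wp x := by nlinarith
      rw [hwpdef] at h6
      rw [h3] at h6
      simp only [Pi.add_apply] at h6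
      rw [h4] at h6
      by_contra hneg
      push_neg at hneg
      rw [abs_of_nonpos hneg] at h6
      linarith
  -- the positive eigenfunction
  set v : Lp ℝ 2 μ := |u| with hvdef
  have hune : u ≠ 0 := by
    intro h
    rw [h, norm_zero] at hu1
    norm_num at hu1
  have hTu' : T u = ‖T‖ • u ∨ T u = (-‖T‖) • u := by
    rcases abs_eq (norm_nonneg T) |>.1 hl with h | h
    · left; rw [hTu, h]
    · right; rw [hTu, h]
  have hTv : T v = ‖T‖ • v := by
    rcases hTu' with h | h
    · exact abs_eig u h hune
    · -- eigenvalue -‖T‖ : |u| still works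
      have hinnu : (inner ℝ (T u) u : ℝ) = -‖T‖ * ‖u‖ ^ 2 := by
        rw [h, real_inner_smul_left, real_inner_self_eq_norm_sq]
      have h1 : ‖T‖ * ‖u‖ ^ 2 ≤ (inner ℝ (T v) v : ℝ) := by
        have := abs_inner_T_le T hkm hub hknn hT' u
        rw [hinnu] at this
        have h2 : |(-‖T‖) * ‖u‖ ^ 2| = ‖T‖ * ‖u‖ ^ 2 := by
          rw [abs_mul, abs_neg, abs_of_nonneg (norm_nonneg T), abs_of_nonneg (by positivity)]
        rw [h2] at this
        exact this
      have h2 : (inner ℝ (T v) v : ℝ) ≤ ‖T‖ * ‖u‖ ^ 2 := by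
        have := quad_ub v
        rwa [hvdef, habs_norm u] at this
      have hvne : v ≠ 0 := by
        intro hz
        have := habs_norm u
        rw [hvdef] at hz
        rw [hz, norm_zero] at this
        exact hune (norm_eq_zero.1 this.symm)
      refine eig_of_quadratic_max T hsa hvne ?_
      rw [hvdef, habs_norm u]
      exact le_antisymm h2 h1
  have hvne : v ≠ 0 := by
    intro hz
    have := habs_norm u
    rw [hvdef] at hz
    rw [hz, norm_zero] at this
    exact hune (norm_eq_zero.1 this.symm)
  have hvnorm : ‖v‖ = 1 := by rw [hvdef, habs_norm u, hu1]
  have hvpos : ∀ᵐ x ∂μ, 0 < v x := by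
    rcases sign v hTv hvne with h | h
    · exact h
    · exfalso
      have hvnn : 0 ≤ᵐ[μ] ⇑v := by
        filter_upwards [Lp.coeFn_abs u] with x hx
        rw [hvdef, hx]; exact abs_nonneg _
      obtain ⟨x, h1, h2⟩ := (h.and hvnn).exists
      simp only [Pi.zero_apply] at h2
      linarith
  -- conclude : eigenspace is spanned by v
  have hmemv : v ∈ Module.End.eigenspace
      (T : Lp ℝ 2 μ →ₗ[ℝ] Lp ℝ 2 μ) ‖T‖ := by
    rw [Module.End.mem_eigenspace_iff]
    exact hTv
  refine finrank_eq_one (⟨v, hmemv⟩ :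
      Module.End.eigenspace (T : Lp ℝ 2 μ →ₗ[ℝ] Lp ℝ 2 μ) ‖T‖) ?_ ?_
  · intro h
    rw [Submodule.mk_eq_zero] at h
    exact hvne h
  · rintro ⟨w, hwmem⟩
    rw [Module.End.mem_eigenspace_iff] at hwmem
    have hw : T w = ‖T‖ • w := hwmem
    set cc : ℝ := inner ℝ w v with hccdef
    refine ⟨cc, ?_⟩
    have hw' : T (w - cc • v) = ‖T‖ • (w - cc • v) := by
      rw [map_sub, T.map_smul, hw, hTv, smul_sub, smul_comm]
    have horth : (inner ℝ (w - cc • v) v : ℝ) = 0 := by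
      rw [inner_sub_left, real_inner_smul_left, real_inner_self_eq_norm_sq, hvnorm]
      simp [hccdef]
    have hzero : w - cc • v = 0 := by
      by_contra hne
      rcases sign (w - cc • v) hw' hne with h | h
      · have := inner_pos_of_ae_pos hμuniv (w - cc • v) v h hvpos
        rw [horth] at this
        exact lt_irrefl _ this
      · have hneg : ∀ᵐ x ∂μ, 0 < (-(w - cc • v) : Lp ℝ 2 μ) x := by
          filter_upwards [h, Lp.coeFn_neg (w - cc • v)] with x h1 h2
          rw [h2]
          simp only [Pi.neg_apply]
          linarith
        have := inner_pos_of_ae_pos hμuniv (-(w - cc • v)) v hneg hvpos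
        rw [inner_neg_left, horth] at this
        simp at this
    refine Subtype.ext ?_
    have hwv : w = cc • v := sub_eq_zero.1 hzero
    show cc • v = w
    rw [hwv]

set_option maxHeartbeats 1000000 in
/-- **Simplicity of the first eigenvalue.** For a bounded measurable set `Ω ⊆ ℝⁿ` of positive
Lebesgue measure and a convolution-type integral operator `T = K_Ω` on `L²(Ω)` with positive
non-increasing kernel `K`, the first eigenvalue `λ₁ = ‖T‖` is simple: the eigenspace
`{u ∈ L²(Ω) : T u = ‖T‖ • u}` is one-dimensional. -/
theorem first_eigenvalue_simple_euclidean
    (n : ℕ) (Ω : Set (EuclideanSpace ℝ (Fin n)))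
    (hΩm : MeasurableSet Ω) (hΩb : Bornology.IsBounded Ω) (hΩpos : 0 < volume Ω)
    (K : ℝ → ℝ)
    (hKpos : ∀ ρ, 0 ≤ ρ → 0 < K ρ)
    (hKmono : ∀ ρ₁ ρ₂, 0 ≤ ρ₁ → ρ₁ ≤ ρ₂ → K ρ₂ ≤ K ρ₁)
    (T : Lp ℝ 2 (volume.restrict Ω) →L[ℝ] Lp ℝ 2 (volume.restrict Ω))
    (hTcomp : IsCompactOperator T)
    (hT : ∀ f : Lp ℝ 2 (volume.restrict Ω),
      ∀ᵐ x ∂(volume.restrict Ω),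
        (T f) x = ∫ y, K (dist x y) * f y ∂(volume.restrict Ω)) :
    Module.finrank ℝ
      ↥(Module.End.eigenspace (T : Lp ℝ 2 (volume.restrict Ω) →ₗ[ℝ] Lp ℝ 2 (volume.restrict Ω))
          ‖T‖) = 1 := by
  haveI : IsFiniteMeasure (volume.restrict Ω) := ⟨by
    rw [Measure.restrict_apply_univ]; exact hΩb.measure_lt_top⟩
  have hμuniv : 0 < (volume.restrict Ω) (Set.univ) := by
    rw [Measure.restrict_apply_univ]; exact hΩpos
  set k : EuclideanSpace ℝ (Fin n) → EuclideanSpace ℝ (Fin n) → ℝ :=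
    fun x y => K (max (dist x y) 0) with hkdef
  have hkeq : ∀ x y, k x y = K (dist x y) := fun x y => by
    rw [hkdef]; simp [max_eq_left dist_nonneg]
  have hkm : Measurable (Function.uncurry k) := by
    have hanti : Antitone (fun ρ : ℝ => K (max ρ 0)) := by
      intro a b hab
      exact hKmono _ _ (le_max_right a 0) (max_le_max hab le_rfl)
    exact hanti.measurable.comp measurable_dist
  have hknn : ∀ x y, 0 ≤ k x y := fun x y => (hKpos _ (le_max_right _ _)).le
  have hub : ∀ x y, |k x y| ≤ K 0 := fun x y => by
    rw [abs_of_nonneg (hknn x y)]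
    exact hKmono 0 _ le_rfl (le_max_right _ _)
  have hksymm : ∀ x y, k x y = k y x := fun x y => by rw [hkdef]; simp [dist_comm]
  obtain ⟨r, hr⟩ := hΩb.subset_closedBall 0
  have hc : 0 < K (max (2 * r) 0) := hKpos _ (le_max_right _ _)
  have hlb : ∀ᵐ x ∂(volume.restrict Ω), ∀ᵐ y ∂(volume.restrict Ω),
      K (max (2 * r) 0) ≤ k x y := by
    filter_upwards [ae_restrict_mem hΩm] with x hx
    filter_upwards [ae_restrict_mem hΩm] with y hy
    have hdx : dist x 0 ≤ r := hr hx
    have hdy : dist y 0 ≤ r := hr hy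
    have hd : dist x y ≤ 2 * r := by
      calc dist x y ≤ dist x 0 + dist 0 y := dist_triangle _ _ _
      _ = dist x 0 + dist y 0 := by rw [dist_comm 0 y]
      _ ≤ 2 * r := by linarith
    exact hKmono _ _ (le_max_right _ _) (max_le_max hd le_rfl)
  have hT' : ∀ f : Lp ℝ 2 (volume.restrict Ω),
      ∀ᵐ x ∂(volume.restrict Ω), T f x = ∫ y, k x y * f y ∂(volume.restrict Ω) := by
    intro f
    filter_upwards [hT f] with x hx
    rw [hx]
    refine integral_congr_ae (Filter.Eventually.of_forall (fun y => ?_))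
    show K (dist x y) * f y = k x y * f y
    rw [hkeq]
  exact first_eigen_aux hμuniv hkm hub hknn hksymm hc hlb T hTcomp hT'
end

section
/- Let Ω ⊆ ℝⁿ be a bounded measurable set of positive Lebesgue measure and K_Ω the associated convolution-type integral operator on L²(Ω) with positive non-increasing kernel K. Suppose λ ∈ ℝ is an eigenvalue of K_Ω with a real eigenfunction u such that both Ω⁺ = {x ∈ Ω : u(x) > 0} and Ω⁻ = {x ∈ Ω : u(x) < 0} have positive Lebesgue measure. Then λ ≤ min(‖K_{Ω⁺}‖, ‖K_{Ω⁻}‖), where K_{Ω±} are the integral operators with the same kernel restricted to Ω± (i.e. λ ≤ min(λ₁(Ω⁺), λ₁(Ω⁻))). -/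
open MeasureTheory RealInnerProductSpace


private lemma aux_nodal (n : ℕ) (Ω Ωs : Set (EuclideanSpace ℝ (Fin n)))
    (hΩsm : MeasurableSet Ωs) (hsub : Ωs ⊆ Ω)
    (hΩb : Bornology.IsBounded Ω) (hΩspos : 0 < volume Ωs)
    (K : ℝ → ℝ)
    (hKpos : ∀ ρ, 0 ≤ ρ → 0 < K ρ)
    (hKmono : ∀ ρ₁ ρ₂, 0 ≤ ρ₁ → ρ₁ ≤ ρ₂ → K ρ₂ ≤ K ρ₁)
    (lam : ℝ) (u : Lp ℝ 2 (volume.restrict Ω))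
    (hTu : ∀ᵐ x ∂(volume.restrict Ω),
      lam * u x = ∫ y, K (dist x y) * u y ∂(volume.restrict Ω))
    (hpos : ∀ᵐ x ∂(volume.restrict Ωs), 0 < u x)
    (hneg : ∀ᵐ x ∂(volume.restrict (Ω \ Ωs)), u x ≤ 0)
    (Ts : Lp ℝ 2 (volume.restrict Ωs) →L[ℝ] Lp ℝ 2 (volume.restrict Ωs))
    (hTs : ∀ f : Lp ℝ 2 (volume.restrict Ωs),
      ∀ᵐ x ∂(volume.restrict Ωs),
        (Ts f) x = ∫ y, K (dist x y) * f y ∂(volume.restrict Ωs)) :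
    lam ≤ ‖Ts‖ := by
  have hle : volume.restrict Ωs ≤ volume.restrict Ω := Measure.restrict_mono hsub le_rfl
  -- kernel measurability via antitone extension
  have hK'anti : Antitone (fun ρ : ℝ => K (max ρ 0)) := fun a b hab =>
    hKmono _ _ (le_max_right a 0) (max_le_max hab le_rfl)
  have hK'meas : Measurable (fun ρ : ℝ => K (max ρ 0)) := hK'anti.measurable
  -- finite measure
  haveI : IsFiniteMeasure (volume.restrict Ω) :=
    ⟨by rw [Measure.restrict_apply_univ]; exact hΩb.measure_lt_top⟩
  have humem : MemLp (u : _ → ℝ) 2 (volume.restrict Ω) := Lp.memLp u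
  have huint : Integrable (u : _ → ℝ) (volume.restrict Ω) := humem.integrable (by norm_num)
  -- integrability of the kernel integrand
  have hker_int : ∀ x, Integrable (fun y => K (dist x y) * u y) (volume.restrict Ω) := by
    intro x
    have hdm : Measurable (fun y : EuclideanSpace ℝ (Fin n) => K (dist x y)) := by
      have h1 : Measurable (fun y : EuclideanSpace ℝ (Fin n) => K (max (dist x y) 0)) :=
        hK'meas.comp (Continuous.dist continuous_const continuous_id).measurable
      convert h1 using 2 with y
      rw [max_eq_left dist_nonneg]
    refine Integrable.mono' (huint.norm.const_mul (K 0))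
      (hdm.stronglyMeasurable.aestronglyMeasurable.mul
        (Lp.stronglyMeasurable u).aestronglyMeasurable)
      (Filter.Eventually.of_forall fun y => ?_)
    have h1 : 0 < K (dist x y) := hKpos _ dist_nonneg
    have h2 : K (dist x y) ≤ K 0 := hKmono 0 _ le_rfl dist_nonneg
    rw [norm_mul, Real.norm_eq_abs (K (dist x y)), abs_of_pos h1]
    exact mul_le_mul_of_nonneg_right h2 (norm_nonneg _)
  -- splitting of the integral
  have hsplit : ∀ x, ∫ y, K (dist x y) * u y ∂(volume.restrict Ω) =
      (∫ y, K (dist x y) * u y ∂(volume.restrict Ωs)) +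
        ∫ y, K (dist x y) * u y ∂(volume.restrict (Ω \ Ωs)) := by
    intro x
    have h1 := (integral_add_compl hΩsm (hker_int x)).symm
    rw [Measure.restrict_restrict hΩsm, Measure.restrict_restrict hΩsm.compl,
      Set.inter_eq_self_of_subset_left hsub, Set.inter_comm, ← Set.diff_eq] at h1
    exact h1
  have hneg_int : ∀ x, ∫ y, K (dist x y) * u y ∂(volume.restrict (Ω \ Ωs)) ≤ 0 := by
    intro x
    refine integral_nonpos_of_ae ?_
    filter_upwards [hneg] with y hy
    exact mul_nonpos_iff.mpr (Or.inl ⟨(hKpos _ dist_nonneg).le, hy⟩)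
  -- the restricted eigenfunction
  have hvmem : MemLp (u : _ → ℝ) 2 (volume.restrict Ωs) := humem.mono_measure hle
  set v : Lp ℝ 2 (volume.restrict Ωs) := hvmem.toLp _ with hvdef
  have hvcoe : v =ᵐ[volume.restrict Ωs] (u : _ → ℝ) := hvmem.coeFn_toLp
  -- key a.e. inequality
  have hkey : ∀ᵐ x ∂(volume.restrict Ωs), lam * u x ≤ (Ts v) x := by
    filter_upwards [hTu.filter_mono (ae_mono hle), hTs v] with x h1 h2
    have h3 : ∫ y, K (dist x y) * v y ∂(volume.restrict Ωs)
        = ∫ y, K (dist x y) * u y ∂(volume.restrict Ωs) :=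
      integral_congr_ae (hvcoe.mono fun y hy => by dsimp only; rw [hy])
    rw [h2, h3]
    rw [hsplit x] at h1
    linarith [hneg_int x, h1]
  -- pointwise nonnegativity
  have hnn : ∀ᵐ x ∂(volume.restrict Ωs), 0 ≤ ((Ts v) x - lam * v x) * v x := by
    filter_upwards [hkey, hpos, hvcoe] with x h1 h2 h3
    rw [h3]
    exact mul_nonneg (by linarith) h2.le
  -- inner product inequality
  have hi1 : Integrable (fun x => (Ts v) x * v x) (volume.restrict Ωs) := by
    have := L2.integrable_inner (𝕜 := ℝ) (Ts v) v
    exact (by simpa [RCLike.inner_apply] using this : Integrable (fun x => v x * (Ts v) x) (volume.restrict Ωs)).congr (Filter.Eventually.of_forall fun x => mul_comm _ _)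
  have hi2 : Integrable (fun x => v x * v x) (volume.restrict Ωs) := by
    have := L2.integrable_inner (𝕜 := ℝ) v v
    simpa [RCLike.inner_apply, sq] using this
  have hinner : lam * ⟪v, v⟫ ≤ ⟪Ts v, v⟫ := by
    have h2 : 0 ≤ ∫ x, ((Ts v) x - lam * v x) * v x ∂(volume.restrict Ωs) :=
      integral_nonneg_of_ae hnn
    have h3 : ∫ x, ((Ts v) x - lam * v x) * v x ∂(volume.restrict Ωs)
        = (∫ x, (Ts v) x * v x ∂(volume.restrict Ωs))
          - lam * ∫ x, v x * v x ∂(volume.restrict Ωs) := by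
      rw [← integral_const_mul, ← integral_sub hi1 (hi2.const_mul lam)]
      congr 1 with x
      ring
    have h4 : ⟪Ts v, v⟫ = ∫ x, (Ts v) x * v x ∂(volume.restrict Ωs) := by
      rw [L2.inner_def]; simp [RCLike.inner_apply]; exact integral_congr_ae (Filter.Eventually.of_forall fun x => mul_comm _ _)
    have h5 : ⟪v, v⟫ = ∫ x, v x * v x ∂(volume.restrict Ωs) := by
      rw [L2.inner_def]; simp [RCLike.inner_apply]; simp only [sq]
    rw [h4, h5]
    linarith [h3 ▸ h2]
  -- v is nonzero
  have hvne : v ≠ 0 := by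
    intro h0
    have hz : (⇑v : _ → ℝ) =ᵐ[volume.restrict Ωs] 0 := h0 ▸ Lp.coeFn_zero ℝ 2 (volume.restrict Ωs)
    have hzu : ∀ᵐ x ∂(volume.restrict Ωs), (u : _ → ℝ) x = 0 := by
      filter_upwards [hz, hvcoe] with x h1 h2
      rw [← h2, h1]; rfl
    haveI : (ae (volume.restrict Ωs)).NeBot := ae_neBot.2 (by
      intro h
      have : volume Ωs = 0 := by
        rw [← Measure.restrict_apply_univ, h]; rfl
      exact absurd this hΩspos.ne')
    obtain ⟨x, hx1, hx2⟩ := (hpos.and hzu).exists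
    rw [hx2] at hx1
    exact lt_irrefl 0 hx1
  have hvpos : 0 < ‖v‖ := norm_pos_iff.mpr hvne
  have hop : ⟪Ts v, v⟫ ≤ ‖Ts‖ * (‖v‖ * ‖v‖) := by
    refine (real_inner_le_norm _ _).trans ?_
    rw [← mul_assoc]
    exact mul_le_mul_of_nonneg_right (Ts.le_opNorm v) (norm_nonneg v)
  have hself : ⟪v, v⟫ = ‖v‖ * ‖v‖ := real_inner_self_eq_norm_mul_norm v
  rw [hself] at hinner
  exact le_of_mul_le_mul_right (hinner.trans hop) (mul_pos hvpos hvpos)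


/-- If `λ` is an eigenvalue of the convolution-type integral operator `K_Ω` on `L²(Ω)`,
`Ω ⊆ ℝⁿ` bounded measurable of positive Lebesgue measure, with a real eigenfunction `u` whose
positivity set `Ω⁺ = {u > 0}` and negativity set `Ω⁻ = {u < 0}` both have positive Lebesgue
measure, then `λ ≤ min(‖K_{Ω⁺}‖, ‖K_{Ω⁻}‖) = min(λ₁(Ω⁺), λ₁(Ω⁻))`, where `K_{Ω±}` are the
integral operators with the same kernel on `Ω±`. -/
theorem eigenvalue_le_min_first_eigenvalues_of_nodal_sets
    (n : ℕ) (Ω : Set (EuclideanSpace ℝ (Fin n)))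
    (hΩm : MeasurableSet Ω) (hΩb : Bornology.IsBounded Ω) (hΩpos : 0 < volume Ω)
    (K : ℝ → ℝ)
    (hKpos : ∀ ρ, 0 ≤ ρ → 0 < K ρ)
    (hKmono : ∀ ρ₁ ρ₂, 0 ≤ ρ₁ → ρ₁ ≤ ρ₂ → K ρ₂ ≤ K ρ₁)
    (T : Lp ℝ 2 (volume.restrict Ω) →L[ℝ] Lp ℝ 2 (volume.restrict Ω))
    (hTcomp : IsCompactOperator T)
    (hT : ∀ f : Lp ℝ 2 (volume.restrict Ω),
      ∀ᵐ x ∂(volume.restrict Ω),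
        (T f) x = ∫ y, K (dist x y) * f y ∂(volume.restrict Ω))
    (lam : ℝ) (u : Lp ℝ 2 (volume.restrict Ω)) (heig : T u = lam • u)
    (Ωp Ωm : Set (EuclideanSpace ℝ (Fin n)))
    (hΩp : Ωp = {x | x ∈ Ω ∧ 0 < u x}) (hΩm' : Ωm = {x | x ∈ Ω ∧ u x < 0})
    (hΩppos : 0 < volume Ωp) (hΩmpos : 0 < volume Ωm)
    (Tp : Lp ℝ 2 (volume.restrict Ωp) →L[ℝ] Lp ℝ 2 (volume.restrict Ωp))
    (hTpcomp : IsCompactOperator Tp)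
    (hTp : ∀ f : Lp ℝ 2 (volume.restrict Ωp),
      ∀ᵐ x ∂(volume.restrict Ωp),
        (Tp f) x = ∫ y, K (dist x y) * f y ∂(volume.restrict Ωp))
    (Tm : Lp ℝ 2 (volume.restrict Ωm) →L[ℝ] Lp ℝ 2 (volume.restrict Ωm))
    (hTmcomp : IsCompactOperator Tm)
    (hTm : ∀ f : Lp ℝ 2 (volume.restrict Ωm),
      ∀ᵐ x ∂(volume.restrict Ωm),
        (Tm f) x = ∫ y, K (dist x y) * f y ∂(volume.restrict Ωm)) :
    lam ≤ min ‖Tp‖ ‖Tm‖ := by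
  have humeas : Measurable (u : _ → ℝ) := (Lp.stronglyMeasurable u).measurable
  have hΩpm : MeasurableSet Ωp := by
    rw [hΩp]
    exact hΩm.inter (measurableSet_lt measurable_const humeas)
  have hΩmm : MeasurableSet Ωm := by
    rw [hΩm']
    exact hΩm.inter (measurableSet_lt humeas measurable_const)
  have hsubp : Ωp ⊆ Ω := by rw [hΩp]; exact fun x hx => hx.1
  have hsubm : Ωm ⊆ Ω := by rw [hΩm']; exact fun x hx => hx.1
  -- eigenvalue equation, pointwise a.e., for u
  have hTu : ∀ᵐ x ∂(volume.restrict Ω),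
      lam * u x = ∫ y, K (dist x y) * u y ∂(volume.restrict Ω) := by
    have h1 := hT u
    rw [heig] at h1
    filter_upwards [h1, Lp.coeFn_smul lam u] with x hx1 hx2
    rw [← hx1, hx2]
    rfl
  -- positive part
  have hlamp : lam ≤ ‖Tp‖ := by
    refine aux_nodal n Ω Ωp hΩpm hsubp hΩb hΩppos K hKpos hKmono lam u hTu ?_ ?_ Tp hTp
    · filter_upwards [ae_restrict_mem hΩpm] with x hx
      exact (hΩp ▸ hx).2
    · filter_upwards [ae_restrict_mem (hΩm.diff hΩpm)] with x hx
      by_contra hc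
      push_neg at hc
      exact hx.2 (hΩp ▸ (⟨hx.1, hc⟩ : x ∈ Ω ∧ 0 < u x))
  -- negative part: use -u
  have hTu' : ∀ᵐ x ∂(volume.restrict Ω),
      lam * (-u : Lp ℝ 2 (volume.restrict Ω)) x
        = ∫ y, K (dist x y) * (-u : Lp ℝ 2 (volume.restrict Ω)) y ∂(volume.restrict Ω) := by
    have h1 := hT (-u)
    have h2 : T (-u) = lam • (-u) := by rw [map_neg, heig, smul_neg]
    rw [h2] at h1
    filter_upwards [h1, Lp.coeFn_smul lam (-u)] with x hx1 hx2
    rw [← hx1, hx2]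
    rfl
  have hnegcoe : ∀ᵐ x ∂(volume.restrict Ω),
      (-u : Lp ℝ 2 (volume.restrict Ω)) x = -(u x) := by
    filter_upwards [Lp.coeFn_neg u] with x hx
    rw [hx]; rfl
  have hlamm : lam ≤ ‖Tm‖ := by
    refine aux_nodal n Ω Ωm hΩmm hsubm hΩb hΩmpos K hKpos hKmono lam (-u) hTu' ?_ ?_ Tm hTm
    · filter_upwards [ae_restrict_mem hΩmm,
        hnegcoe.filter_mono (ae_mono (Measure.restrict_mono hsubm le_rfl))] with x hx hx2
      rw [hx2]
      exact neg_pos.mpr (hΩm' ▸ hx).2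
    · have hsub' : Ω \ Ωm ⊆ Ω := Set.diff_subset
      filter_upwards [ae_restrict_mem (hΩm.diff hΩmm),
        hnegcoe.filter_mono (ae_mono (Measure.restrict_mono hsub' le_rfl))] with x hx hx2
      rw [hx2]
      by_contra hc
      push_neg at hc
      rw [neg_pos] at hc
      exact hx.2 (hΩm' ▸ (⟨hx.1, hc⟩ : x ∈ Ω ∧ u x < 0))
  exact le_min hlamp hlamm
end

section
/- (Jentsch lemma on the hyperbolic plane.) Let Ω ⊆ ℍ be a bounded measurable subset of the hyperbolic upper half-plane with positive hyperbolic measure and K_Ω the associated convolution-type integral operator on L²(Ω,μ) with positive non-increasing kernel K. Then: (i) the operator norm ‖K_Ω‖ is strictly positive and is an eigenvalue of K_Ω while −‖K_Ω‖ is not, so the eigenvalue of largest modulus λ₁ is positive; (ii) the eigenspace of K_Ω for the eigenvalue ‖K_Ω‖ is one-dimensional; (iii) every eigenfunction for the eigenvalue ‖K_Ω‖ is either positive almost everywhere or negative almost everywhere on Ω. -/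
open MeasureTheory
open scoped UpperHalfPlane

noncomputable instance : MeasurableSpace ℍ := borel ℍ
instance : BorelSpace ℍ := ⟨rfl⟩

/-- The hyperbolic area measure `μ` on the upper half-plane `ℍ`,
given by `dμ(z) = (Im z)⁻² dLeb(z)`. -/
noncomputable def hypMeasure : Measure ℍ :=
  (Measure.comap (fun z : ℍ => (z : ℂ)) volume).withDensity
    (fun z => ENNReal.ofReal ((z.im ^ 2)⁻¹))

open scoped RealInnerProductSpace

set_option linter.unusedSectionVars false

namespace JentschAux

open Filter Topology


lemma exists_eigen {E : Type*} [NormedAddCommGroup E] [InnerProductSpace ℝ E]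
    [CompleteSpace E] {T : E →L[ℝ] E} (hsa : IsSelfAdjoint T)
    (hTc : IsCompactOperator T) (hTn : 0 < ‖T‖) :
    ∃ u : E, u ≠ 0 ∧ (T u = ‖T‖ • u ∨ T u = (-‖T‖) • u) := by
  set l : ℝ := ‖T‖ with hl
  -- a sequence of unit vectors almost attaining the norm
  have hseq : ∀ n : ℕ, ∃ x : E, ‖x‖ = 1 ∧ l * (1 - 1/(n+1)) ≤ ‖T x‖ := by
    intro n
    have hr0 : 0 ≤ l * (1 - 1/(n+1)) := by
      have h1 : 1/((n:ℝ)+1) ≤ 1 := by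
        rw [div_le_one (by positivity)]; linarith [Nat.cast_nonneg (α := ℝ) n]
      have := hTn.le
      nlinarith
    have hrlt : l * (1 - 1/(n+1)) < l := by
      have h1 : 0 < 1/((n:ℝ)+1) := by positivity
      nlinarith
    obtain ⟨x, hx1, hx2⟩ := ContinuousLinearMap.exists_lt_apply_of_lt_opNorm T hrlt
    have hTx : T x ≠ 0 := by
      intro h0
      rw [h0, norm_zero] at hx2
      exact absurd hx2 (not_lt.2 hr0)
    have hx0 : x ≠ 0 := fun h => hTx (by rw [h, map_zero])
    have hxn : 0 < ‖x‖ := norm_pos_iff.2 hx0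
    refine ⟨‖x‖⁻¹ • x, ?_, ?_⟩
    · rw [norm_smul, norm_inv, norm_norm, inv_mul_cancel₀ hxn.ne']
    · rw [ContinuousLinearMap.map_smul, norm_smul, norm_inv, norm_norm]
      calc l * (1 - 1/(n+1)) ≤ ‖T x‖ := hx2.le
        _ = 1 * ‖T x‖ := (one_mul _).symm
        _ ≤ ‖x‖⁻¹ * ‖T x‖ := by
            refine mul_le_mul_of_nonneg_right ?_ (norm_nonneg _)
            have h2 : 0 < ‖x‖⁻¹ := inv_pos.2 hxn
            nlinarith [mul_inv_cancel₀ hxn.ne']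
  choose x hx1 hx2 using hseq
  -- the norms converge
  have hTx_le : ∀ n, ‖T (x n)‖ ≤ l := fun n => by
    simpa [hx1 n] using T.le_opNorm (x n)
  have hTxnorm : Tendsto (fun n => ‖T (x n)‖) atTop (𝓝 l) := by
    have h1 : Tendsto (fun n : ℕ => l * (1 - 1/(n+1))) atTop (𝓝 l) := by
      have := tendsto_one_div_add_atTop_nhds_zero_nat (𝕜 := ℝ)
      have h2 : Tendsto (fun n : ℕ => 1 - 1/((n:ℝ)+1)) atTop (𝓝 1) := by
        simpa using tendsto_const_nhds.sub this
      simpa using tendsto_const_nhds.mul h2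
    exact tendsto_of_tendsto_of_tendsto_of_le_of_le h1 tendsto_const_nhds
      (fun n => hx2 n) hTx_le
  -- compactness: a convergent subsequence of T (T (x n))
  have hmem : ∀ n, T (T (x n)) ∈ closure (T '' Metric.closedBall 0 l) := by
    intro n
    apply subset_closure
    exact ⟨T (x n), by simpa [Metric.mem_closedBall, dist_eq_norm] using hTx_le n, rfl⟩
  obtain ⟨a, -, φ, hφ, hconv⟩ :=
    (hTc.isCompact_closure_image_closedBall (𝕜₁ := ℝ) l).tendsto_subseq hmem
  -- the error term goes to zero
  have herr : Tendsto (fun n => ‖T (T (x n)) - (l^2) • x n‖) atTop (𝓝 0) := by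
    have hkey : ∀ n, ‖T (T (x n)) - (l^2) • x n‖^2 ≤ l^4 - l^2 * ‖T (x n)‖^2 := by
      intro n
      have hinner : ⟪T (T (x n)), x n⟫ = ‖T (x n)‖^2 := by
        have h := hsa.isSymmetric (T (x n)) (x n)
        simp only [ContinuousLinearMap.coe_coe] at h
        rw [h]
        exact real_inner_self_eq_norm_sq (T (x n))
      have hns : ‖T (T (x n))‖ ≤ l * ‖T (x n)‖ := T.le_opNorm _
      have hTxn : ‖T (x n)‖ ≤ l := hTx_le n
      have hexp : ‖T (T (x n)) - (l^2) • x n‖^2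
          = ‖T (T (x n))‖^2 - 2 * (l^2 * ‖T (x n)‖^2) + l^4 * ‖x n‖^2 := by
        rw [norm_sub_sq_real, real_inner_smul_right, hinner, norm_smul]
        simp only [Real.norm_eq_abs]
        rw [abs_of_nonneg (by positivity : (0:ℝ) ≤ l^2)]
        ring
      rw [hexp, hx1 n]
      nlinarith [norm_nonneg (T (T (x n))), norm_nonneg (T (x n))]
    have hb : Tendsto (fun n => l^4 - l^2 * ‖T (x n)‖^2) atTop (𝓝 0) := by
      have := (hTxnorm.pow 2)
      have h2 : Tendsto (fun n => l^2 * ‖T (x n)‖^2) atTop (𝓝 (l^2 * l^2)) :=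
        tendsto_const_nhds.mul this
      have : Tendsto (fun n => l^4 - l^2 * ‖T (x n)‖^2) atTop (𝓝 (l^4 - l^2 * l^2)) :=
        tendsto_const_nhds.sub h2
      simpa [show l^4 - l^2*l^2 = 0 by ring] using this
    have hsq : Tendsto (fun n => Real.sqrt (l^4 - l^2 * ‖T (x n)‖^2)) atTop (𝓝 0) := by
      have := (Real.continuous_sqrt.tendsto 0).comp hb
      simpa [Function.comp_def] using this
    refine squeeze_zero (fun n => norm_nonneg _) (fun n => ?_) hsq
    rw [show ‖T (T (x n)) - (l^2) • x n‖
        = Real.sqrt (‖T (T (x n)) - (l^2) • x n‖^2) by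
          rw [Real.sqrt_sq (norm_nonneg _)]]
    exact Real.sqrt_le_sqrt (hkey n)
  -- the subsequence of x converges
  have hl2 : (l^2 : ℝ) ≠ 0 := by positivity
  have hxconv : Tendsto (fun n => x (φ n)) atTop (𝓝 ((l^2)⁻¹ • a)) := by
    have h1 : Tendsto (fun n => T (T (x (φ n))) - (T (T (x (φ n))) - (l^2) • x (φ n)))
        atTop (𝓝 (a - 0)) := by
      refine hconv.sub ?_
      have := (herr.comp hφ.tendsto_atTop)
      exact tendsto_zero_iff_norm_tendsto_zero.mpr this
    have h2 : ∀ n, T (T (x (φ n))) - (T (T (x (φ n))) - (l^2) • x (φ n)) = (l^2) • x (φ n) := by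
      intro n; abel
    rw [show (𝓝 (a - 0)) = 𝓝 a by rw [sub_zero]] at h1
    have h3 : Tendsto (fun n => (l^2) • x (φ n)) atTop (𝓝 a) := by
      simpa [h2] using h1
    have h4 := h3.const_smul ((l^2)⁻¹)
    simpa [smul_smul, inv_mul_cancel₀ hl2] using h4
  set v : E := (l^2)⁻¹ • a with hv
  have hvnorm : ‖v‖ = 1 := by
    have h1 : Tendsto (fun n => ‖x (φ n)‖) atTop (𝓝 ‖v‖) := hxconv.norm
    have h2 : Tendsto (fun n => ‖x (φ n)‖) atTop (𝓝 1) := by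
      simpa [hx1] using (tendsto_const_nhds : Tendsto (fun _ : ℕ => (1:ℝ)) atTop (𝓝 1))
    exact tendsto_nhds_unique h1 h2
  have hv0 : v ≠ 0 := by
    intro h; rw [h, norm_zero] at hvnorm; exact one_ne_zero hvnorm.symm
  have hTTv : T (T v) = (l^2) • v := by
    have h1 : Tendsto (fun n => T (T (x (φ n)))) atTop (𝓝 (T (T v))) :=
      (T.continuous.tendsto _).comp ((T.continuous.tendsto _).comp hxconv)
    have h2 := tendsto_nhds_unique h1 hconv
    rw [h2, hv, smul_smul, mul_inv_cancel₀ hl2, one_smul]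
  -- factor
  by_cases hw : T v + l • v = 0
  · refine ⟨v, hv0, Or.inr ?_⟩
    rw [neg_smul]
    exact eq_neg_of_add_eq_zero_left hw
  · refine ⟨T v + l • v, hw, Or.inl ?_⟩
    have : T (T v + l • v) = l • (T v + l • v) := by
      rw [map_add, hTTv, ContinuousLinearMap.map_smul]
      module
    exact this



variable {α : Type*} [MeasurableSpace α] {ν : Measure α}

section Basic

variable [IsFiniteMeasure ν]

lemma integrableL2 (f : Lp ℝ 2 ν) : Integrable f ν :=
  (Lp.memLp f).integrable one_le_two

lemma ae_comp_fst {μ1 μ2 : Measure α} [SFinite μ2] {P : α → Prop} (h : ∀ᵐ x ∂μ1, P x) :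
    ∀ᵐ p ∂(μ1.prod μ2), P p.1 := by
  rw [ae_iff] at h ⊢
  have hsub : {p : α × α | ¬ P p.1} ⊆ (toMeasurable μ1 {a | ¬P a}) ×ˢ (Set.univ : Set α) :=
    fun p hp => Set.mem_prod.2 ⟨subset_toMeasurable μ1 _ hp, Set.mem_univ _⟩
  refine measure_mono_null hsub ?_
  rw [Measure.prod_prod, measure_toMeasurable, h, zero_mul]

lemma ae_comp_snd {μ1 μ2 : Measure α} [SFinite μ2] {P : α → Prop} (h : ∀ᵐ x ∂μ2, P x) :
    ∀ᵐ p ∂(μ1.prod μ2), P p.2 := by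
  rw [ae_iff] at h ⊢
  have hsub : {p : α × α | ¬ P p.2} ⊆ (Set.univ : Set α) ×ˢ (toMeasurable μ2 {a | ¬P a}) :=
    fun p hp => Set.mem_prod.2 ⟨Set.mem_univ _, subset_toMeasurable μ2 _ hp⟩
  refine measure_mono_null hsub ?_
  rw [Measure.prod_prod, measure_toMeasurable, h, mul_zero]

lemma support_meas_pos (hν : ν ≠ 0) {h : α → ℝ} (hpos : ∀ᵐ x ∂ν, 0 < h x) :
    0 < ν (Function.support h) := by
  have hc : ν (Function.support h)ᶜ = 0 := by
    rw [measure_eq_zero_iff_ae_notMem]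
    filter_upwards [hpos] with x hx
    simp [Function.mem_support, ne_of_gt hx]
  rcases (zero_le : (0:ENNReal) ≤ ν (Function.support h)).lt_or_eq with h' | h'
  · exact h'
  · exfalso
    apply hν
    rw [← Measure.measure_univ_eq_zero]
    have := measure_union_le (μ := ν) (Function.support h) (Function.support h)ᶜ
    rw [Set.union_compl_self, hc, ← h'] at this
    simpa using this

lemma integral_pos_of_ae_pos (hν : ν ≠ 0) {h : α → ℝ} (hi : Integrable h ν)
    (hpos : ∀ᵐ x ∂ν, 0 < h x) : 0 < ∫ x, h x ∂ν := by
  rw [integral_pos_iff_support_of_nonneg_ae (by filter_upwards [hpos] with x hx; exact hx.le) hi]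
  exact support_meas_pos hν hpos

lemma inner_pos (hν : ν ≠ 0) {h g : Lp ℝ 2 ν} (hh : ∀ᵐ x ∂ν, 0 < h x)
    (hg : ∀ᵐ x ∂ν, 0 < g x) : 0 < ⟪h, g⟫ := by
  rw [L2.inner_def]
  have hi : Integrable (fun x => (inner ℝ (h x) (g x) : ℝ)) ν := L2.integrable_inner h g
  refine integral_pos_of_ae_pos hν hi ?_
  filter_upwards [hh, hg] with x h1 h2
  simp only [RCLike.inner_apply, conj_trivial]
  positivity

lemma ne_zero_of_ae_pos (hν : ν ≠ 0) {h : Lp ℝ 2 ν} (hpos : ∀ᵐ x ∂ν, 0 < h x) : h ≠ 0 := by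
  intro h0
  have h1 : ⇑h =ᵐ[ν] 0 := Lp.eq_zero_iff_ae_eq_zero.mp h0
  have : ∀ᵐ _x ∂ν, False := by
    filter_upwards [hpos, h1] with x hx h0x
    rw [h0x] at hx
    exact lt_irrefl 0 hx
  apply hν
  rw [← Measure.measure_univ_eq_zero]
  simpa [ae_iff] using this

end Basic

section Kernel

variable [IsFiniteMeasure ν] {k : α → α → ℝ} {c C : ℝ}
  {T : Lp ℝ 2 ν →L[ℝ] Lp ℝ 2 ν}

lemma kernel_integrable (hkm : Measurable (Function.uncurry k))
    (hbd : ∀ᵐ p ∂(ν.prod ν), c ≤ k p.1 p.2 ∧ k p.1 p.2 ≤ C) (hc : 0 ≤ c)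
    (f g : Lp ℝ 2 ν) :
    Integrable (fun p : α × α => k p.1 p.2 * (f p.2 * g p.1)) (ν.prod ν) := by
  have hf := integrableL2 f
  have hg := integrableL2 g
  have hmeas : AEStronglyMeasurable (fun p : α × α => k p.1 p.2 * (f p.2 * g p.1))
      (ν.prod ν) :=
    hkm.aestronglyMeasurable.mul ((Lp.aestronglyMeasurable f).comp_snd.mul
      (Lp.aestronglyMeasurable g).comp_fst)
  refine Integrable.mono' ((hg.norm.mul_prod hf.norm).const_mul C) hmeas ?_
  filter_upwards [hbd] with p hp
  have h1 : |k p.1 p.2| ≤ C := abs_le.2 ⟨by linarith [hp.1], hp.2⟩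
  have h0 : (0:ℝ) ≤ |f p.2| * |g p.1| := by positivity
  calc ‖k p.1 p.2 * (f p.2 * g p.1)‖ = |k p.1 p.2| * (|f p.2| * |g p.1|) := by
        simp [Real.norm_eq_abs, abs_mul]
    _ ≤ C * (|f p.2| * |g p.1|) := mul_le_mul_of_nonneg_right h1 h0
    _ = C * (‖g p.1‖ * ‖f p.2‖) := by rw [Real.norm_eq_abs, Real.norm_eq_abs]; ring

lemma inner_eq (hkm : Measurable (Function.uncurry k))
    (hbd : ∀ᵐ p ∂(ν.prod ν), c ≤ k p.1 p.2 ∧ k p.1 p.2 ≤ C) (hc : 0 ≤ c)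
    (hT : ∀ f : Lp ℝ 2 ν, ∀ᵐ x ∂ν, T f x = ∫ y, k x y * f y ∂ν)
    (f g : Lp ℝ 2 ν) :
    ⟪T f, g⟫ = ∫ p, k p.1 p.2 * (f p.2 * g p.1) ∂(ν.prod ν) := by
  have hint := kernel_integrable hkm hbd hc f g
  calc ⟪T f, g⟫ = ∫ x, T f x * g x ∂ν := by
        rw [L2.inner_def]; simp [RCLike.inner_apply, mul_comm]
    _ = ∫ x, (∫ y, k x y * f y ∂ν) * g x ∂ν := by
        refine integral_congr_ae ?_
        filter_upwards [hT f] with x hx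
        rw [hx]
    _ = ∫ x, ∫ y, k x y * (f y * g x) ∂ν ∂ν := by
        refine integral_congr_ae (Eventually.of_forall fun x => ?_)
        show (∫ y, k x y * f y ∂ν) * g x = ∫ y, k x y * (f y * g x) ∂ν
        rw [← integral_mul_const]
        simp only [mul_assoc]
    _ = ∫ p, k p.1 p.2 * (f p.2 * g p.1) ∂(ν.prod ν) := (integral_prod _ hint).symm

lemma inner_symm (hkm : Measurable (Function.uncurry k))
    (hksymm : ∀ x y, k x y = k y x)
    (hbd : ∀ᵐ p ∂(ν.prod ν), c ≤ k p.1 p.2 ∧ k p.1 p.2 ≤ C) (hc : 0 ≤ c)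
    (hT : ∀ f : Lp ℝ 2 ν, ∀ᵐ x ∂ν, T f x = ∫ y, k x y * f y ∂ν)
    (f g : Lp ℝ 2 ν) : ⟪T f, g⟫ = ⟪T g, f⟫ := by
  rw [inner_eq hkm hbd hc hT f g, inner_eq hkm hbd hc hT g f]
  rw [← integral_prod_swap]
  refine integral_congr_ae (Eventually.of_forall fun p => ?_)
  simp only [Prod.fst_swap, Prod.snd_swap]
  rw [hksymm p.2 p.1]
  ring

lemma isSelfAdjointT (hkm : Measurable (Function.uncurry k))
    (hksymm : ∀ x y, k x y = k y x)
    (hbd : ∀ᵐ p ∂(ν.prod ν), c ≤ k p.1 p.2 ∧ k p.1 p.2 ≤ C) (hc : 0 ≤ c)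
    (hT : ∀ f : Lp ℝ 2 ν, ∀ᵐ x ∂ν, T f x = ∫ y, k x y * f y ∂ν) :
    IsSelfAdjoint T := by
  rw [ContinuousLinearMap.isSelfAdjoint_iff_isSymmetric]
  intro f g
  simp only [ContinuousLinearMap.coe_coe]
  exact (inner_symm hkm hksymm hbd hc hT f g).trans (real_inner_comm f (T g))

lemma ae_pos_of_nonneg (hν : ν ≠ 0) (hkm : Measurable (Function.uncurry k))
    (hbd : ∀ᵐ p ∂(ν.prod ν), c ≤ k p.1 p.2 ∧ k p.1 p.2 ≤ C) (hc : 0 < c)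
    (hT : ∀ f : Lp ℝ 2 ν, ∀ᵐ x ∂ν, T f x = ∫ y, k x y * f y ∂ν)
    (f : Lp ℝ 2 ν) (hf : ∀ᵐ x ∂ν, 0 ≤ f x) (hf0 : f ≠ 0) :
    ∀ᵐ x ∂ν, 0 < T f x := by
  have hfi := integrableL2 f
  have hI : 0 < ∫ y, f y ∂ν := by
    rw [integral_pos_iff_support_of_nonneg_ae (by filter_upwards [hf] with x hx; exact hx) hfi]
    rcases (zero_le : (0:ENNReal) ≤ ν (Function.support ⇑f)).lt_or_eq with h' | h'
    · exact h'
    · exfalso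
      apply hf0
      rw [Lp.eq_zero_iff_ae_eq_zero]
      have : ∀ᵐ x ∂ν, x ∉ Function.support ⇑f := measure_eq_zero_iff_ae_notMem.mp h'.symm
      filter_upwards [this] with x hx
      simpa [Function.mem_support, not_not] using hx
  filter_upwards [hT f, Measure.ae_ae_of_ae_prod hbd] with x hx hbx
  rw [hx]
  have hint : Integrable (fun y => k x y * f y) ν := by
    refine Integrable.mono' (hfi.norm.const_mul C)
      ((hkm.of_uncurry_left).aestronglyMeasurable.mul (Lp.aestronglyMeasurable f)) ?_
    filter_upwards [hbx] with y hy
    have : |k x y| ≤ C := abs_le.2 ⟨by linarith [hy.1], hy.2⟩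
    calc ‖k x y * f y‖ = |k x y| * ‖f y‖ := by simp [Real.norm_eq_abs, abs_mul]
      _ ≤ C * ‖f y‖ := mul_le_mul_of_nonneg_right this (norm_nonneg _)
  have hmono : c * ∫ y, f y ∂ν ≤ ∫ y, k x y * f y ∂ν := by
    rw [← integral_const_mul]
    refine integral_mono_ae (hfi.const_mul c) hint ?_
    filter_upwards [hbx, hf] with y h1 h2
    exact mul_le_mul_of_nonneg_right h1.1 h2
  have : 0 < c * ∫ y, f y ∂ν := mul_pos hc hI
  linarith

end Kernel

section Kernel2

variable [IsFiniteMeasure ν] {k : α → α → ℝ} {c C : ℝ}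
  {T : Lp ℝ 2 ν →L[ℝ] Lp ℝ 2 ν}

lemma norm_posT (hν : ν ≠ 0) (hkm : Measurable (Function.uncurry k))
    (hbd : ∀ᵐ p ∂(ν.prod ν), c ≤ k p.1 p.2 ∧ k p.1 p.2 ≤ C) (hc : 0 < c)
    (hT : ∀ f : Lp ℝ 2 ν, ∀ᵐ x ∂ν, T f x = ∫ y, k x y * f y ∂ν) :
    0 < ‖T‖ := by
  set f : Lp ℝ 2 ν := indicatorConstLp 2 MeasurableSet.univ (measure_ne_top ν Set.univ) (1:ℝ)
    with hfdef
  have hf : ⇑f =ᵐ[ν] fun _ => (1:ℝ) := by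
    refine (indicatorConstLp_coeFn (p := 2)).trans ?_
    refine Filter.Eventually.of_forall fun x => ?_
    simp
  have hfnn : ∀ᵐ x ∂ν, 0 ≤ f x := by filter_upwards [hf] with x hx; rw [hx]; norm_num
  have hf0 : f ≠ 0 :=
    ne_zero_of_ae_pos hν (by filter_upwards [hf] with x hx; rw [hx]; norm_num)
  have hTfpos := ae_pos_of_nonneg hν hkm hbd hc hT f hfnn hf0
  have hTf : T f ≠ 0 := ne_zero_of_ae_pos hν hTfpos
  have hT0 : T ≠ 0 := by intro h; apply hTf; rw [h]; simp
  rcases (norm_nonneg T).lt_or_eq with h | h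
  · exact h
  · exact absurd ((ContinuousLinearMap.opNorm_zero_iff T).mp h.symm) hT0

lemma abs_eigen (hν : ν ≠ 0) (hkm : Measurable (Function.uncurry k))
    (hksymm : ∀ x y, k x y = k y x)
    (hbd : ∀ᵐ p ∂(ν.prod ν), c ≤ k p.1 p.2 ∧ k p.1 p.2 ≤ C) (hc : 0 < c)
    (hT : ∀ f : Lp ℝ 2 ν, ∀ᵐ x ∂ν, T f x = ∫ y, k x y * f y ∂ν)
    (hTn : 0 < ‖T‖)
    {u : Lp ℝ 2 ν} (hu : u ≠ 0) {ε : ℝ} (hε : ε = 1 ∨ ε = -1)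
    (hTu : T u = (ε * ‖T‖) • u) :
    T |u| = ‖T‖ • |u| ∧ (∀ᵐ x ∂ν, 0 < |u x|) ∧
      (∀ᵐ p ∂(ν.prod ν), |u p.1| * |u p.2| = ε * (u p.1 * u p.2)) := by
  have hsa := isSelfAdjointT hkm hksymm hbd hc.le hT
  set l := ‖T‖ with hldef
  set a : Lp ℝ 2 ν := |u| with ha
  have hab : ⇑a =ᵐ[ν] fun x => |u x| := Lp.coeFn_abs u
  have hna : ‖a‖ = ‖u‖ := norm_abs_eq_norm u
  have ha0 : a ≠ 0 := by
    intro h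
    apply hu
    rw [← norm_eq_zero, ← hna, h, norm_zero]
  have habs_prod : ∀ᵐ p ∂(ν.prod ν), a p.1 = |u p.1| ∧ a p.2 = |u p.2| :=
    (ae_comp_fst hab).and (ae_comp_snd hab)
  have hiu : ⟪T u, u⟫ = ε * l * ‖u‖^2 := by
    rw [hTu, real_inner_smul_left, real_inner_self_eq_norm_sq]
  have hIu : ∫ p, k p.1 p.2 * (u p.2 * u p.1) ∂(ν.prod ν) = ε * l * ‖u‖^2 := by
    rw [← inner_eq hkm hbd hc.le hT u u]; exact hiu
  have hint_u := kernel_integrable hkm hbd hc.le u u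
  have hint_a := kernel_integrable hkm hbd hc.le a a
  have hIa : ⟪T a, a⟫ = ∫ p, k p.1 p.2 * (a p.2 * a p.1) ∂(ν.prod ν) :=
    inner_eq hkm hbd hc.le hT a a
  have hIεu : ∫ p, ε * (k p.1 p.2 * (u p.2 * u p.1)) ∂(ν.prod ν) = l * ‖u‖^2 := by
    rw [integral_const_mul, hIu]
    rcases hε with h | h <;> rw [h] <;> ring
  have hptwise : ∀ᵐ p ∂(ν.prod ν),
      ε * (k p.1 p.2 * (u p.2 * u p.1)) ≤ k p.1 p.2 * (a p.2 * a p.1) := by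
    filter_upwards [hbd, habs_prod] with p hp hap
    have hk0 : 0 ≤ k p.1 p.2 := le_trans hc.le hp.1
    rw [hap.1, hap.2]
    have h1 : ε * (u p.2 * u p.1) ≤ |u p.2| * |u p.1| := by
      rw [← abs_mul]
      rcases hε with h | h <;> rw [h]
      · rw [one_mul]; exact le_abs_self _
      · rw [neg_one_mul]; exact neg_le_abs _
    calc ε * (k p.1 p.2 * (u p.2 * u p.1)) = k p.1 p.2 * (ε * (u p.2 * u p.1)) := by ring
      _ ≤ k p.1 p.2 * (|u p.2| * |u p.1|) := mul_le_mul_of_nonneg_left h1 hk0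
  have hfirst : l * ‖u‖^2 ≤ ⟪T a, a⟫ := by
    rw [hIa, ← hIεu]
    exact integral_mono_ae (hint_u.const_mul ε) hint_a hptwise
  have hsecond : ⟪T a, a⟫ ≤ l * ‖u‖^2 := by
    calc ⟪T a, a⟫ ≤ ‖T a‖ * ‖a‖ := real_inner_le_norm _ _
      _ ≤ (l * ‖a‖) * ‖a‖ := mul_le_mul_of_nonneg_right (T.le_opNorm a) (norm_nonneg _)
      _ = l * ‖u‖^2 := by rw [hna]; ring
  have hTaa : ⟪T a, a⟫ = l * ‖u‖^2 := le_antisymm hsecond hfirst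
  have hmax : IsMaxOn T.reApplyInnerSelf (Metric.sphere (0 : Lp ℝ 2 ν) ‖a‖) a := by
    intro x hx
    have hxn : ‖x‖ = ‖a‖ := by simpa [dist_zero_right] using hx
    show T.reApplyInnerSelf x ≤ T.reApplyInnerSelf a
    rw [T.reApplyInnerSelf_apply, T.reApplyInnerSelf_apply]
    simp only [RCLike.re_to_real]
    calc ⟪T x, x⟫ ≤ ‖T x‖ * ‖x‖ := real_inner_le_norm _ _
      _ ≤ (l * ‖x‖) * ‖x‖ := mul_le_mul_of_nonneg_right (T.le_opNorm x) (norm_nonneg _)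
      _ = l * ‖u‖^2 := by rw [hxn, hna]; ring
      _ = ⟪T a, a⟫ := hTaa.symm
  have hray := hsa.eq_smul_self_of_isLocalExtrOn (Or.inr hmax.localize)
  have hrq : T.rayleighQuotient a = l := by
    have hre : T.reApplyInnerSelf a = ⟪T a, a⟫ := by
      rw [T.reApplyInnerSelf_apply]; simp
    have hu2 : ‖u‖^2 ≠ 0 := by
      have : ‖u‖ ≠ 0 := norm_ne_zero_iff.2 hu
      positivity
    rw [ContinuousLinearMap.rayleighQuotient, hre, hTaa, hna]
    field_simp
  rw [hrq] at hray
  have hTa : T a = l • a := by simpa using hray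
  have hann : ∀ᵐ x ∂ν, 0 ≤ a x := by
    filter_upwards [hab] with x hx; rw [hx]; exact abs_nonneg _
  have hTapos := ae_pos_of_nonneg hν hkm hbd hc hT a hann ha0
  have haepos : ∀ᵐ x ∂ν, 0 < |u x| := by
    have hsmul : ⇑(l • a) =ᵐ[ν] fun x => l * a x := Lp.coeFn_smul l a
    have hTa' : ⇑(T a) =ᵐ[ν] ⇑(l • a) := by rw [hTa]
    filter_upwards [hab, hTapos, hsmul, hTa'] with x h1 h2 h3 h4
    rw [← h1]
    rw [h4, h3] at h2
    nlinarith
  refine ⟨hTa, haepos, ?_⟩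
  have hintsub : Integrable (fun p : α × α =>
      k p.1 p.2 * (a p.2 * a p.1) - ε * (k p.1 p.2 * (u p.2 * u p.1))) (ν.prod ν) :=
    hint_a.sub (hint_u.const_mul ε)
  have hnn : 0 ≤ᵐ[ν.prod ν] fun p : α × α =>
      k p.1 p.2 * (a p.2 * a p.1) - ε * (k p.1 p.2 * (u p.2 * u p.1)) := by
    filter_upwards [hptwise] with p hp
    simpa [sub_nonneg] using hp
  have hzero : ∫ p, (k p.1 p.2 * (a p.2 * a p.1)
      - ε * (k p.1 p.2 * (u p.2 * u p.1))) ∂(ν.prod ν) = 0 := by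
    rw [integral_sub hint_a (hint_u.const_mul ε), hIεu, ← hIa, hTaa, sub_self]
  have hae0 := (integral_eq_zero_iff_of_nonneg_ae hnn hintsub).mp hzero
  filter_upwards [hae0, hbd, habs_prod] with p h0 hp hap
  simp only [Pi.zero_apply] at h0
  have hkpos : 0 < k p.1 p.2 := lt_of_lt_of_le hc hp.1
  rw [hap.1, hap.2] at h0
  have h0' : k p.1 p.2 * (|u p.2| * |u p.1|) = k p.1 p.2 * (ε * (u p.2 * u p.1)) := by
    linear_combination h0
  have hcanc := mul_left_cancel₀ (ne_of_gt hkpos) h0'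
  linear_combination hcanc

lemma sign_dichotomy (hν : ν ≠ 0) {u : Lp ℝ 2 ν}
    (habs : ∀ᵐ x ∂ν, 0 < |u x|)
    (heq : ∀ᵐ p ∂(ν.prod ν), |u p.1| * |u p.2| = u p.1 * u p.2) :
    (∀ᵐ x ∂ν, 0 < u x) ∨ (∀ᵐ x ∂ν, u x < 0) := by
  have hm := Lp.aestronglyMeasurable u
  set g := hm.mk u with hgdef
  have hug : ⇑u =ᵐ[ν] g := hm.ae_eq_mk
  have hmg : Measurable g := hm.stronglyMeasurable_mk.measurable
  have habsg : ∀ᵐ x ∂ν, 0 < |g x| := by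
    filter_upwards [habs, hug] with x h1 h2; rw [← h2]; exact h1
  have heqg : ∀ᵐ p ∂(ν.prod ν), |g p.1| * |g p.2| = g p.1 * g p.2 := by
    filter_upwards [heq, ae_comp_fst (μ2 := ν) hug, ae_comp_snd (μ1 := ν) hug] with p h1 h2 h3
    rw [← h2, ← h3]; exact h1
  set P := {x | 0 < g x} with hP
  set N := {x | g x < 0} with hN
  have hPN : ν P * ν N = 0 := by
    rw [← Measure.prod_prod]
    refine measure_mono_null (fun p hp => ?_) (by rw [ae_iff] at heqg; exact heqg)
    obtain ⟨hp1, hp2⟩ := hp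
    simp only [Set.mem_setOf_eq]
    intro hcon
    have h1 : 0 < g p.1 := hp1
    have h2 : g p.2 < 0 := hp2
    nlinarith [abs_nonneg (g p.1), abs_nonneg (g p.2), le_abs_self (g p.1),
      abs_of_pos h1, abs_of_neg h2]
  rcases mul_eq_zero.mp hPN with h | h
  · right
    have hnm : ∀ᵐ x ∂ν, x ∉ P := measure_eq_zero_iff_ae_notMem.mp h
    filter_upwards [hnm, habsg, hug] with x h1 h2 h3
    rw [h3]
    simp only [hP, Set.mem_setOf_eq, not_lt] at h1
    rcases lt_or_eq_of_le h1 with h4 | h4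
    · exact h4
    · exfalso; rw [h4] at h2; simp at h2
  · left
    have hnm : ∀ᵐ x ∂ν, x ∉ N := measure_eq_zero_iff_ae_notMem.mp h
    filter_upwards [hnm, habsg, hug] with x h1 h2 h3
    rw [h3]
    simp only [hN, Set.mem_setOf_eq, not_lt] at h1
    rcases lt_or_eq_of_le h1 with h4 | h4
    · exact h4
    · exfalso; rw [← h4] at h2; simp at h2

lemma no_neg_eigen (hν : ν ≠ 0) {u : Lp ℝ 2 ν}
    (habs : ∀ᵐ x ∂ν, 0 < |u x|)
    (heq : ∀ᵐ p ∂(ν.prod ν), |u p.1| * |u p.2| = -(u p.1 * u p.2)) : False := by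
  have hm := Lp.aestronglyMeasurable u
  set g := hm.mk u with hgdef
  have hug : ⇑u =ᵐ[ν] g := hm.ae_eq_mk
  have habsg : ∀ᵐ x ∂ν, 0 < |g x| := by
    filter_upwards [habs, hug] with x h1 h2; rw [← h2]; exact h1
  have heqg : ∀ᵐ p ∂(ν.prod ν), |g p.1| * |g p.2| = -(g p.1 * g p.2) := by
    filter_upwards [heq, ae_comp_fst (μ2 := ν) hug, ae_comp_snd (μ1 := ν) hug] with p h1 h2 h3
    rw [← h2, ← h3]; exact h1
  set P := {x | 0 < g x} with hP
  set N := {x | g x < 0} with hN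
  have hbad : (ν.prod ν) {p : α × α | ¬ (|g p.1| * |g p.2| = -(g p.1 * g p.2))} = 0 := by
    rw [ae_iff] at heqg; exact heqg
  have hPP : ν P * ν P = 0 := by
    rw [← Measure.prod_prod]
    refine measure_mono_null (fun p hp => ?_) hbad
    obtain ⟨hp1, hp2⟩ := hp
    have h1 : 0 < g p.1 := hp1
    have h2 : 0 < g p.2 := hp2
    intro hcon
    nlinarith [abs_of_pos h1, abs_of_pos h2]
  have hNN : ν N * ν N = 0 := by
    rw [← Measure.prod_prod]
    refine measure_mono_null (fun p hp => ?_) hbad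
    obtain ⟨hp1, hp2⟩ := hp
    have h1 : g p.1 < 0 := hp1
    have h2 : g p.2 < 0 := hp2
    intro hcon
    nlinarith [abs_of_neg h1, abs_of_neg h2]
  have hP0 : ν P = 0 := by rcases mul_eq_zero.mp hPP with h | h <;> exact h
  have hN0 : ν N = 0 := by rcases mul_eq_zero.mp hNN with h | h <;> exact h
  have : ∀ᵐ _x ∂ν, False := by
    filter_upwards [measure_eq_zero_iff_ae_notMem.mp hP0, measure_eq_zero_iff_ae_notMem.mp hN0,
      habsg] with x h1 h2 h3
    simp only [hP, hN, Set.mem_setOf_eq, not_lt] at h1 h2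
    have : g x = 0 := le_antisymm h1 h2
    rw [this] at h3; simp at h3
  apply hν
  rw [← Measure.measure_univ_eq_zero]
  simpa [ae_iff] using this

lemma inner_ne_zero_of_sign (hν : ν ≠ 0) {v w : Lp ℝ 2 ν}
    (hv : (∀ᵐ x ∂ν, 0 < v x) ∨ (∀ᵐ x ∂ν, v x < 0))
    (hw : ∀ᵐ x ∂ν, 0 < w x) : ⟪v, w⟫ ≠ 0 := by
  rcases hv with h | h
  · exact ne_of_gt (inner_pos hν h hw)
  · have hneg : ∀ᵐ x ∂ν, 0 < (-v) x := by
      filter_upwards [Lp.coeFn_neg v, h] with x h1 h2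
      rw [h1]; simpa using h2
    have := inner_pos hν hneg hw
    rw [inner_neg_left] at this
    intro h0
    rw [h0] at this
    simp at this

lemma eigen_sign (hν : ν ≠ 0) (hkm : Measurable (Function.uncurry k))
    (hksymm : ∀ x y, k x y = k y x)
    (hbd : ∀ᵐ p ∂(ν.prod ν), c ≤ k p.1 p.2 ∧ k p.1 p.2 ≤ C) (hc : 0 < c)
    (hT : ∀ f : Lp ℝ 2 ν, ∀ᵐ x ∂ν, T f x = ∫ y, k x y * f y ∂ν)
    (hTn : 0 < ‖T‖)
    {w : Lp ℝ 2 ν} (hw0 : w ≠ 0) (hTw : T w = ‖T‖ • w) :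
    (∀ᵐ x ∂ν, 0 < w x) ∨ (∀ᵐ x ∂ν, w x < 0) := by
  have hTw' : T w = ((1:ℝ) * ‖T‖) • w := by rw [one_mul]; exact hTw
  obtain ⟨-, habs, heq⟩ := abs_eigen hν hkm hksymm hbd hc hT hTn hw0 (Or.inl rfl) hTw'
  refine sign_dichotomy hν habs ?_
  filter_upwards [heq] with p hp
  rw [hp]; ring

lemma main (hν : ν ≠ 0) (hkm : Measurable (Function.uncurry k))
    (hksymm : ∀ x y, k x y = k y x)
    (hbd : ∀ᵐ p ∂(ν.prod ν), c ≤ k p.1 p.2 ∧ k p.1 p.2 ≤ C) (hc : 0 < c)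
    (hT : ∀ f : Lp ℝ 2 ν, ∀ᵐ x ∂ν, T f x = ∫ y, k x y * f y ∂ν)
    (hTcomp : IsCompactOperator T) :
    (0 < ‖T‖ ∧
      (∃ u : Lp ℝ 2 ν, u ≠ 0 ∧ T u = ‖T‖ • u) ∧
      ¬ (∃ u : Lp ℝ 2 ν, u ≠ 0 ∧ T u = (-‖T‖) • u)) ∧
    Module.finrank ℝ
      ↥(Module.End.eigenspace (T : Lp ℝ 2 ν →ₗ[ℝ] Lp ℝ 2 ν) ‖T‖) = 1 ∧
    (∀ u : Lp ℝ 2 ν, u ≠ 0 → T u = ‖T‖ • u →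
      (∀ᵐ x ∂ν, 0 < u x) ∨ (∀ᵐ x ∂ν, u x < 0)) := by
  have hsa := isSelfAdjointT hkm hksymm hbd hc.le hT
  have hTn := norm_posT hν hkm hbd hc hT
  obtain ⟨u, hu0, hor⟩ := exists_eigen hsa hTcomp hTn
  have hεor : ∃ ε : ℝ, (ε = 1 ∨ ε = -1) ∧ T u = (ε * ‖T‖) • u := by
    rcases hor with h | h
    · exact ⟨1, Or.inl rfl, by rw [one_mul]; exact h⟩
    · exact ⟨-1, Or.inr rfl, by rw [neg_one_mul]; exact h⟩
  obtain ⟨ε, hε, hTu⟩ := hεor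
  obtain ⟨hTa, habs, -⟩ := abs_eigen hν hkm hksymm hbd hc hT hTn hu0 hε hTu
  set a : Lp ℝ 2 ν := |u| with ha
  have ha0 : a ≠ 0 := by
    intro h
    apply hu0
    rw [← norm_eq_zero, ← norm_abs_eq_norm u, ← ha, h, norm_zero]
  have hapos : ∀ᵐ x ∂ν, 0 < a x := by
    filter_upwards [Lp.coeFn_abs u, habs] with x h1 h2
    rw [ha, h1]; exact h2
  have hno : ¬ ∃ w : Lp ℝ 2 ν, w ≠ 0 ∧ T w = (-‖T‖) • w := by
    rintro ⟨w, hw0, hTw⟩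
    have hTw' : T w = ((-1 : ℝ) * ‖T‖) • w := by rw [neg_one_mul]; exact hTw
    obtain ⟨-, habsw, heqw⟩ :=
      abs_eigen hν hkm hksymm hbd hc hT hTn hw0 (Or.inr rfl) hTw'
    refine no_neg_eigen hν habsw ?_
    filter_upwards [heqw] with p hp
    rw [hp]; ring
  have hpart3 : ∀ w : Lp ℝ 2 ν, w ≠ 0 → T w = ‖T‖ • w →
      (∀ᵐ x ∂ν, 0 < w x) ∨ (∀ᵐ x ∂ν, w x < 0) := fun w hw0 hTw =>
    eigen_sign hν hkm hksymm hbd hc hT hTn hw0 hTw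
  have hmemE : a ∈ Module.End.eigenspace (T : Lp ℝ 2 ν →ₗ[ℝ] Lp ℝ 2 ν) ‖T‖ := by
    rw [Module.End.mem_eigenspace_iff]
    exact hTa
  have hE : Module.End.eigenspace (T : Lp ℝ 2 ν →ₗ[ℝ] Lp ℝ 2 ν) ‖T‖
      = Submodule.span ℝ {a} := by
    refine le_antisymm ?_ ?_
    · intro w hw
      have hTw : T w = ‖T‖ • w := Module.End.mem_eigenspace_iff.mp hw
      set d : ℝ := ⟪w, a⟫ / ⟪a, a⟫ with hd
      have hwd : w - d • a ∈ Module.End.eigenspace (T : Lp ℝ 2 ν →ₗ[ℝ] Lp ℝ 2 ν) ‖T‖ :=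
        Submodule.sub_mem _ hw (Submodule.smul_mem _ d hmemE)
      have haa : ⟪a, a⟫ ≠ 0 := by
        rw [real_inner_self_eq_norm_sq]
        have : ‖a‖ ≠ 0 := norm_ne_zero_iff.2 ha0
        positivity
      have horth : ⟪w - d • a, a⟫ = 0 := by
        rw [inner_sub_left, real_inner_smul_left, hd]
        field_simp
        ring
      by_cases hwz : w - d • a = 0
      · have : w = d • a := by rwa [sub_eq_zero] at hwz
        rw [this]
        exact Submodule.smul_mem _ d (Submodule.mem_span_singleton_self a)
      · exfalso
        have hTwd : T (w - d • a) = ‖T‖ • (w - d • a) :=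
          Module.End.mem_eigenspace_iff.mp hwd
        exact inner_ne_zero_of_sign hν (hpart3 _ hwz hTwd) hapos horth
    · rw [Submodule.span_singleton_le_iff_mem]
      exact hmemE
  refine ⟨⟨hTn, ⟨a, ha0, hTa⟩, hno⟩, ?_, hpart3⟩
  rw [hE]
  exact finrank_span_singleton ha0

end Kernel2

section UpperHalfPlaneFacts

open UpperHalfPlane

instance : SecondCountableTopology ℍ :=
  UpperHalfPlane.isOpenEmbedding_coe.isEmbedding.secondCountableTopology

lemma measurableEmbedding_coe : MeasurableEmbedding ((↑) : ℍ → ℂ) :=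
  UpperHalfPlane.isOpenEmbedding_coe.measurableEmbedding

lemma hypMeasure_lt_top {Ω : Set ℍ} (hΩm : MeasurableSet Ω) (hΩb : Bornology.IsBounded Ω) :
    hypMeasure Ω < ⊤ := by
  rcases Set.eq_empty_or_nonempty Ω with h | ⟨z₀, hz₀⟩
  · simp [h, hypMeasure]
  obtain ⟨r, hr⟩ := hΩb.subset_closedBall z₀
  set c0 : ℝ := z₀.im / Real.exp r with hc0def
  have hc0 : 0 < c0 := div_pos z₀.im_pos (Real.exp_pos r)
  have him : ∀ z ∈ Ω, c0 ≤ z.im := by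
    intro z hz
    have hd : dist z₀ z ≤ r := by
      have := hr hz
      rw [Metric.mem_closedBall] at this
      rw [dist_comm]; exact this
    have h1 := UpperHalfPlane.im_le_im_mul_exp_dist z₀ z
    have h2 : Real.exp (dist z₀ z) ≤ Real.exp r := Real.exp_le_exp.2 hd
    have h3 : z₀.im ≤ z.im * Real.exp r := le_trans h1 (by nlinarith [z.im_pos])
    rw [hc0def, div_le_iff₀ (Real.exp_pos r)]
    exact h3
  set R : ℝ := z₀.im * (Real.exp r - 1) with hRdef
  have him2 : ∀ z ∈ Ω, (z : ℂ) ∈ Metric.closedBall (z₀ : ℂ) R := by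
    intro z hz
    rw [Metric.mem_closedBall]
    refine le_trans (UpperHalfPlane.dist_coe_le z z₀) ?_
    have hd : dist z z₀ ≤ r := by have := hr hz; rwa [Metric.mem_closedBall] at this
    have h2 : Real.exp (dist z z₀) ≤ Real.exp r := Real.exp_le_exp.2 hd
    nlinarith [z₀.im_pos]
  rw [hypMeasure, withDensity_apply _ hΩm]
  have hle : ∫⁻ z in Ω, ENNReal.ofReal ((UpperHalfPlane.im z ^ 2)⁻¹)
        ∂(Measure.comap (fun z : ℍ => (z : ℂ)) volume)
      ≤ ∫⁻ _ in Ω, ENNReal.ofReal ((c0 ^ 2)⁻¹)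
        ∂(Measure.comap (fun z : ℍ => (z : ℂ)) volume) := by
    refine setLIntegral_mono' hΩm fun z hz => ?_
    refine ENNReal.ofReal_le_ofReal ?_
    have h1 := him z hz
    have h2 : 0 < z.im := z.im_pos
    have h3 : c0 ^ 2 ≤ z.im ^ 2 := by nlinarith
    exact inv_anti₀ (by positivity) h3
  refine lt_of_le_of_lt hle ?_
  rw [setLIntegral_const]
  have hcomap : (Measure.comap (fun z : ℍ => (z : ℂ)) volume) Ω
      = volume ((fun z : ℍ => (z : ℂ)) '' Ω) := by
    exact Measure.comap_apply _ measurableEmbedding_coe.injective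
      (fun s hs => measurableEmbedding_coe.measurableSet_image.2 hs) volume hΩm
  rw [hcomap]
  have himg : volume ((fun z : ℍ => (z : ℂ)) '' Ω) < ⊤ := by
    refine lt_of_le_of_lt (measure_mono (?_ : _ ⊆ Metric.closedBall (z₀ : ℂ) R))
      measure_closedBall_lt_top
    rintro w ⟨z, hz, rfl⟩
    exact him2 z hz
  exact ENNReal.mul_lt_top ENNReal.ofReal_lt_top himg

end UpperHalfPlaneFacts


end JentschAux



/-- **Jentsch lemma on the hyperbolic plane.** Let `Ω ⊆ ℍ` be a bounded measurable set of
positive hyperbolic measure and `T = K_Ω` the associated compact convolution-type integral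
operator on `L²(Ω,μ)` with positive non-increasing kernel `K` (with respect to the hyperbolic
distance). Then (i) `‖T‖ > 0`, `‖T‖` is an eigenvalue of `T` while `-‖T‖` is not, so the
eigenvalue of largest modulus `λ₁` is positive; (ii) the eigenspace of `T` for the eigenvalue
`‖T‖` is one-dimensional; (iii) every eigenfunction for the eigenvalue `‖T‖` is either
positive a.e. or negative a.e. on `Ω`. -/
theorem jentsch_lemma_hyperbolic
    (Ω : Set ℍ)
    (hΩm : MeasurableSet Ω) (hΩb : Bornology.IsBounded Ω) (hΩpos : 0 < hypMeasure Ω)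
    (K : ℝ → ℝ)
    (hKpos : ∀ ρ, 0 ≤ ρ → 0 < K ρ)
    (hKmono : ∀ ρ₁ ρ₂, 0 ≤ ρ₁ → ρ₁ ≤ ρ₂ → K ρ₂ ≤ K ρ₁)
    (T : Lp ℝ 2 (hypMeasure.restrict Ω) →L[ℝ] Lp ℝ 2 (hypMeasure.restrict Ω))
    (hTcomp : IsCompactOperator T)
    (hT : ∀ f : Lp ℝ 2 (hypMeasure.restrict Ω),
      ∀ᵐ x ∂(hypMeasure.restrict Ω),
        (T f) x = ∫ y, K (dist x y) * f y ∂(hypMeasure.restrict Ω)) :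
    (0 < ‖T‖ ∧
      (∃ u : Lp ℝ 2 (hypMeasure.restrict Ω), u ≠ 0 ∧ T u = ‖T‖ • u) ∧
      ¬ (∃ u : Lp ℝ 2 (hypMeasure.restrict Ω), u ≠ 0 ∧ T u = (-‖T‖) • u)) ∧
    Module.finrank ℝ
      ↥(Module.End.eigenspace
          (T : Lp ℝ 2 (hypMeasure.restrict Ω) →ₗ[ℝ] Lp ℝ 2 (hypMeasure.restrict Ω)) ‖T‖) = 1 ∧
    (∀ u : Lp ℝ 2 (hypMeasure.restrict Ω), u ≠ 0 → T u = ‖T‖ • u →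
      (∀ᵐ x ∂(hypMeasure.restrict Ω), 0 < u x) ∨
      (∀ᵐ x ∂(hypMeasure.restrict Ω), u x < 0)) := by
  classical
  haveI : IsFiniteMeasure (hypMeasure.restrict Ω) := ⟨by
    rw [Measure.restrict_apply_univ]
    exact JentschAux.hypMeasure_lt_top hΩm hΩb⟩
  have hν0 : hypMeasure.restrict Ω ≠ 0 := by
    intro h
    have h2 : (hypMeasure.restrict Ω) Set.univ = 0 := by rw [h]; simp
    rw [Measure.restrict_apply_univ] at h2
    rw [h2] at hΩpos
    exact lt_irrefl 0 hΩpos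
  have hkeq : ∀ x y : ℍ, K (max (dist x y) 0) = K (dist x y) := by
    intro x y
    rw [max_eq_left dist_nonneg]
  have hkm : Measurable (Function.uncurry (fun x y : ℍ => K (max (dist x y) 0))) := by
    have hanti : Antitone (fun ρ : ℝ => K (max ρ 0)) := fun ρ₁ ρ₂ h =>
      hKmono _ _ (le_max_right _ _) (max_le_max h le_rfl)
    have h1 : Measurable (fun ρ : ℝ => K (max ρ 0)) := hanti.measurable
    have h2 : Measurable (fun p : ℍ × ℍ => dist p.1 p.2) := measurable_dist
    exact h1.comp h2
  have hksymm : ∀ x y : ℍ, K (max (dist x y) 0) = K (max (dist y x) 0) := fun x y => by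
    rw [dist_comm]
  have hcpos : 0 < K (Metric.diam Ω) := hKpos _ Metric.diam_nonneg
  have hbd : ∀ᵐ p ∂((hypMeasure.restrict Ω).prod (hypMeasure.restrict Ω)),
      K (Metric.diam Ω) ≤ K (max (dist p.1 p.2) 0) ∧ K (max (dist p.1 p.2) 0) ≤ K 0 := by
    have h1 : ∀ᵐ x ∂(hypMeasure.restrict Ω), x ∈ Ω := ae_restrict_mem hΩm
    have hmem := (JentschAux.ae_comp_fst (μ1 := hypMeasure.restrict Ω)
      (μ2 := hypMeasure.restrict Ω) h1).and (JentschAux.ae_comp_snd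
      (μ1 := hypMeasure.restrict Ω) (μ2 := hypMeasure.restrict Ω) h1)
    filter_upwards [hmem] with p hp
    constructor
    · refine hKmono _ _ (le_max_right _ _) ?_
      refine max_le ?_ Metric.diam_nonneg
      exact Metric.dist_le_diam_of_mem hΩb hp.1 hp.2
    · exact hKmono 0 _ le_rfl (le_max_right _ _)
  have hT' : ∀ f : Lp ℝ 2 (hypMeasure.restrict Ω), ∀ᵐ x ∂(hypMeasure.restrict Ω),
      T f x = ∫ y, K (max (dist x y) 0) * f y ∂(hypMeasure.restrict Ω) := by
    intro f
    filter_upwards [hT f] with x hx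
    rw [hx]
    refine integral_congr_ae (Filter.Eventually.of_forall fun y => ?_)
    simp only [hkeq]
  exact JentschAux.main hν0 hkm hksymm hbd hcpos hT' hTcomp
end
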